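/- arXiv:math/0310246 — 5 statements merged into one kernel-verified Lean document; each statement's English description precedes it below -/
import Mathlib

section
/- Let V and W be real normed vector spaces, n ≥ 1 a natural number, and f : V → W a C^n function such that Df(v)[v] = n · f(v) for all v ∈ V. Then f is a homogeneous polynomial of degree n: f(v) = (1/n!) · Dⁿf(0)[v, …, v] for all v ∈ V, where Dⁿf(0) is the n-th iterated derivative of f at 0; in particular there exists a continuous n-multilinear map B : V × ⋯ × V → W with f(v) = B(v, …, v) for all v. -/
/-!
Along the ray `s ↦ exp s • v` Euler's identity reads `d/ds f = n • f`, so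
`exp (-n s) • f (exp s • v)` is constant and `f (t • v) = t ^ n • f v` for `t > 0`.
Hence the `n`-th derivative of `t ↦ f (t • v)` equals `n! • f v` for `t > 0`, and by continuity
also at `t = 0`, where it is `Dⁿf(0)[v, …, v]`.
-/

open Filter Topology

theorem iteratedDeriv_comp_smul_right {𝕜 E F : Type*} [NontriviallyNormedField 𝕜]
    [NormedAddCommGroup E] [NormedSpace 𝕜 E] [NormedAddCommGroup F] [NormedSpace 𝕜 F]
    {n : ℕ} {f : E → F} (hf : ContDiff 𝕜 n f) (v : E) (t : 𝕜) :
    iteratedDeriv n (fun s : 𝕜 => f (s • v)) t = iteratedFDeriv 𝕜 n f (t • v) (fun _ => v) := by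
  have := ((ContinuousLinearMap.id 𝕜 𝕜).smulRight v).iteratedFDeriv_comp_right hf t le_rfl
  rw [iteratedDeriv_eq_iteratedFDeriv]
  simpa [Function.comp_def] using congr($this fun _ => 1)

section

variable {V W : Type*} [NormedAddCommGroup V] [NormedSpace ℝ V]
  [NormedAddCommGroup W] [NormedSpace ℝ W]

theorem iteratedDeriv_pow_smul_self (n : ℕ) (c : W) (t : ℝ) :
    iteratedDeriv n (fun s : ℝ => s ^ n • c) t = (n.factorial : ℝ) • c := by
  rw [iteratedDeriv_smul_const (by fun_prop), iteratedDeriv_pow, Nat.descFactorial_self,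
    Nat.sub_self, pow_zero, mul_one]

theorem iteratedDeriv_zero_eq_factorial_smul {n : ℕ} {g : ℝ → W} (hg : ContDiff ℝ n g) {c : W}
    (hpos : ∀ t, 0 < t → g t = t ^ n • c) :
    iteratedDeriv n g 0 = (n.factorial : ℝ) • c := by
  have hright : ∀ t, 0 < t → iteratedDeriv n g t = (n.factorial : ℝ) • c := fun t ht => by
    rw [← iteratedDeriv_pow_smul_self n c t]
    refine Filter.EventuallyEq.iteratedDeriv_eq n ?_
    filter_upwards [Ioi_mem_nhds ht] with s hs using hpos s hs
  refine tendsto_nhds_unique (l := 𝓝[>] 0)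
    ((hg.continuous_iteratedDeriv' n).continuousAt.mono_left nhdsWithin_le_nhds) ?_
  exact tendsto_const_nhds.congr' (eventually_mem_nhdsWithin.mono fun t ht => (hright t ht).symm)

theorem apply_smul_eq_rpow_smul_of_euler {f : V → W} {r : ℝ} (hf : Differentiable ℝ f)
    (heuler : ∀ v, fderiv ℝ f v v = r • f v) (v : V) {t : ℝ} (ht : 0 < t) :
    f (t • v) = t ^ r • f v := by
  set F : ℝ → W := fun s => Real.exp (-r * s) • f (Real.exp s • v)
  have hF : ∀ s, HasDerivAt F 0 s := by
    intro s
    have hray : HasDerivAt (fun s => f (Real.exp s • v)) (r • f (Real.exp s • v)) s := by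
      rw [← heuler]
      exact (hf _).hasFDerivAt.comp_hasDerivAt s ((Real.hasDerivAt_exp s).smul_const v)
    refine ((((hasDerivAt_id s).const_mul (-r)).exp).smul hray).congr_deriv ?_
    rw [smul_smul, ← add_smul, id, mul_one, mul_neg, mul_comm, add_neg_cancel, zero_smul]
  have hconst : F (Real.log t) = F 0 :=
    is_const_of_deriv_eq_zero (fun s => (hF s).differentiableAt) (fun s => (hF s).deriv) _ _
  simp only [F, Real.exp_log ht, mul_zero, Real.exp_zero, one_smul] at hconst
  rw [← hconst, smul_smul, Real.rpow_def_of_pos ht, ← Real.exp_add]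
  simp [mul_comm]

theorem factorial_smul_eq_iteratedFDeriv_of_euler {n : ℕ} (hn : 1 ≤ n) {f : V → W}
    (hf : ContDiff ℝ n f) (heuler : ∀ v, fderiv ℝ f v v = (n : ℝ) • f v) (v : V) :
    (n.factorial : ℝ) • f v = iteratedFDeriv ℝ n f 0 (fun _ => v) := by
  have hray : ∀ t : ℝ, 0 < t → f (t • v) = t ^ n • f v := fun t ht => by
    rw [apply_smul_eq_rpow_smul_of_euler (hf.differentiable (mod_cast Nat.one_le_iff_ne_zero.mp hn))
      heuler v ht, Real.rpow_natCast]
  have hline := iteratedDeriv_comp_smul_right hf v 0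
  rw [zero_smul] at hline
  rw [← hline, iteratedDeriv_zero_eq_factorial_smul (by fun_prop) hray]

end

/-- Example 3.4 ii): a `C^n` function satisfying `Df(v)[v] = n • f v` is a homogeneous
polynomial of degree `n`: it equals `(1/n!) • Dⁿf(0)[v, …, v]`, and in particular it is
the restriction to the diagonal of a continuous `n`-multilinear map. -/
theorem stmt_7 {V : Type*} [NormedAddCommGroup V] [NormedSpace ℝ V]
    {W : Type*} [NormedAddCommGroup W] [NormedSpace ℝ W]
    (n : ℕ) (hn : 1 ≤ n) (f : V → W) (hf : ContDiff ℝ n f)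
    (heuler : ∀ v : V, fderiv ℝ f v v = (n : ℝ) • f v) :
    (∀ v : V, f v = ((n.factorial : ℝ))⁻¹ • iteratedFDeriv ℝ n f 0 (fun _ => v)) ∧
    ∃ B : ContinuousMultilinearMap ℝ (fun _ : Fin n => V) W,
      ∀ v : V, f v = B (fun _ => v) := by
  have hpoly : ∀ v : V, f v = ((n.factorial : ℝ))⁻¹ • iteratedFDeriv ℝ n f 0 (fun _ => v) :=
    fun v => by
      rw [← factorial_smul_eq_iteratedFDeriv_of_euler hn hf heuler v, inv_smul_smul₀]
      exact_mod_cast n.factorial_ne_zero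
  exact ⟨hpoly, ((n.factorial : ℝ))⁻¹ • iteratedFDeriv ℝ n f 0, hpoly⟩
end

section
/- Let M be a smooth real manifold without boundary, Δ and X smooth vector fields on M, and n ∈ ℝ. Assume (M,Δ) is a strict homogeneous structure: there is an open dense subset O ⊆ M such that for every x ∈ O the cotangent space T*_x M is spanned by the differentials d_x f of smooth functions f : M → ℝ satisfying Δf = f. For a smooth function g, write (Δg)(x) = d_x g(Δ(x)) and (Xg)(x) = d_x g(X(x)). Then the Lie bracket of vector fields satisfies [Δ, X] = n · X if and only if for every smooth f : M → ℝ with Δf = f one has Δ(Xf) = (n+1) · (Xf). -/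
open scoped Manifold Topology
open Set

/-- The pushforward to the model space `E` of a vector field on `M` by the extended
chart at `x₀` (with junk values outside the chart). -/
noncomputable def chartPushforward {E : Type*} [NormedAddCommGroup E] [NormedSpace ℝ E]
    {M : Type*} [TopologicalSpace M] [ChartedSpace E M]
    (x₀ : M) (Δ : (x : M) → TangentSpace 𝓘(ℝ, E) x) : E → E :=
  fun y =>
    mfderiv 𝓘(ℝ, E) 𝓘(ℝ, E) (extChartAt 𝓘(ℝ, E) x₀)
      ((extChartAt 𝓘(ℝ, E) x₀).symm y) (Δ ((extChartAt 𝓘(ℝ, E) x₀).symm y))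

/-- The Lie bracket of two vector fields on a manifold, computed in the extended chart
at the point: push both fields forward by the chart, take the flat Lie bracket
`VectorField.lieBracket`, and pull the result back by (the inverse of) the chart
differential. -/
noncomputable def mLieBracket {E : Type*} [NormedAddCommGroup E] [NormedSpace ℝ E]
    {M : Type*} [TopologicalSpace M] [ChartedSpace E M]
    (Δ X : (x : M) → TangentSpace 𝓘(ℝ, E) x) (x₀ : M) : TangentSpace 𝓘(ℝ, E) x₀ :=
  (mfderiv 𝓘(ℝ, E) 𝓘(ℝ, E) (extChartAt 𝓘(ℝ, E) x₀) x₀).inverse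
    ((VectorField.lieBracket ℝ (chartPushforward x₀ Δ) (chartPushforward x₀ X)
      (extChartAt 𝓘(ℝ, E) x₀ x₀) : E))

noncomputable section

variable {E : Type*} [NormedAddCommGroup E] [NormedSpace ℝ E]
  {M : Type*} [TopologicalSpace M] [ChartedSpace E M]
  [IsManifold 𝓘(ℝ, E) (⊤ : ℕ∞) M]

lemma mfderiv_extChartAt_eq {x₀ x : M} (hx : x ∈ (extChartAt 𝓘(ℝ, E) x₀).source) :
    mfderiv 𝓘(ℝ, E) 𝓘(ℝ, E) (extChartAt 𝓘(ℝ, E) x₀) x = tangentCoordChange 𝓘(ℝ, E) x x₀ x := by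
  rw [extChartAt_source] at hx
  rw [(hasMFDerivAt_extChartAt (I := 𝓘(ℝ, E)) hx).mfderiv]
  exact mfderiv_chartAt_eq_tangentCoordChange hx

lemma mfderiv_extChartAt_self_apply (x₀ : M) (v : TangentSpace 𝓘(ℝ, E) x₀) :
    mfderiv 𝓘(ℝ, E) 𝓘(ℝ, E) (extChartAt 𝓘(ℝ, E) x₀) x₀ v = v := by
  rw [mfderiv_extChartAt_eq (mem_extChartAt_source x₀)]
  exact tangentCoordChange_self (I := 𝓘(ℝ, E)) (M := M) (x := x₀) (z := x₀) (v := v)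
    (mem_extChartAt_source x₀)

lemma mfderiv_extChartAt_self' (x₀ : M) :
    mfderiv 𝓘(ℝ, E) 𝓘(ℝ, E) (extChartAt 𝓘(ℝ, E) x₀) x₀ = ContinuousLinearMap.id ℝ E := by
  refine ContinuousLinearMap.ext fun v => ?_
  exact mfderiv_extChartAt_self_apply x₀ v

lemma chartPushforward_apply {X : (x : M) → TangentSpace 𝓘(ℝ, E) x} {x₀ x : M}
    (hx : x ∈ (extChartAt 𝓘(ℝ, E) x₀).source) :
    chartPushforward x₀ X (extChartAt 𝓘(ℝ, E) x₀ x)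
      = mfderiv 𝓘(ℝ, E) 𝓘(ℝ, E) (extChartAt 𝓘(ℝ, E) x₀) x (X x) := by
  unfold chartPushforward
  rw [(extChartAt 𝓘(ℝ, E) x₀).left_inv hx]

lemma mLieBracket_eq (Δ X : (x : M) → TangentSpace 𝓘(ℝ, E) x) (x₀ : M) :
    mLieBracket Δ X x₀ = VectorField.lieBracket ℝ (chartPushforward x₀ Δ)
      (chartPushforward x₀ X) (extChartAt 𝓘(ℝ, E) x₀ x₀) := by
  unfold mLieBracket
  rw [mfderiv_extChartAt_self']
  have : (ContinuousLinearMap.id ℝ E) = ((ContinuousLinearEquiv.refl ℝ E : E ≃L[ℝ] E) :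
      E →L[ℝ] E) := rfl
  exact congrArg (fun L : E →L[ℝ] E => L _) ContinuousLinearMap.inverse_id

lemma contMDiffAt_mfderiv_chart_apply
    {X : (x : M) → TangentSpace 𝓘(ℝ, E) x}
    (hX : ContMDiff 𝓘(ℝ, E) 𝓘(ℝ, E).tangent (⊤ : ℕ∞)
      (fun x => (⟨x, X x⟩ : TangentBundle 𝓘(ℝ, E) M)))
    (x₀ : M) {z : M} (hz : z ∈ (extChartAt 𝓘(ℝ, E) x₀).source) :
    ContMDiffAt 𝓘(ℝ, E) 𝓘(ℝ, E) (⊤ : ℕ∞)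
      (fun x => mfderiv 𝓘(ℝ, E) 𝓘(ℝ, E) (extChartAt 𝓘(ℝ, E) x₀) x (X x)) z := by
  have hu_z : ContMDiffAt 𝓘(ℝ, E) 𝓘(ℝ, E) (⊤ : ℕ∞)
      (fun x ↦ (trivializationAt E (TangentSpace 𝓘(ℝ, E)) z ⟨x, X x⟩).2) z :=
    (Bundle.contMDiffAt_section z).1 (hX z)
  set T : E → E := (extChartAt 𝓘(ℝ, E) x₀) ∘ (extChartAt 𝓘(ℝ, E) z).symm with hT
  set t₀ : Set E := (extChartAt 𝓘(ℝ, E) z).target ∩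
    ((extChartAt 𝓘(ℝ, E) z).symm ⁻¹'
      ((extChartAt 𝓘(ℝ, E) z).source ∩ (extChartAt 𝓘(ℝ, E) x₀).source)) with ht₀def
  have ht₀ : IsOpen t₀ :=
    (continuousOn_extChartAt_symm z).isOpen_inter_preimage (isOpen_extChartAt_target z)
      ((isOpen_extChartAt_source z).inter (isOpen_extChartAt_source x₀))
  have hTsm : ContMDiffOn 𝓘(ℝ, E) 𝓘(ℝ, E) (⊤ : ℕ∞) T t₀ := by
    apply (contMDiffOn_extChartAt (x := x₀)).comp
      ((contMDiffOn_extChartAt_symm z).mono inter_subset_left)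
    intro y hy
    have := hy.2.2
    rwa [extChartAt_source] at this
  have hTd : ContDiffOn ℝ (⊤ : ℕ∞) T t₀ := contMDiffOn_iff_contDiffOn.1 hTsm
  have hfT : ContDiffOn ℝ (⊤ : ℕ∞) (fderiv ℝ T) t₀ :=
    hTd.fderiv_of_isOpen ht₀ (le_of_eq rfl)
  have hmemz : extChartAt 𝓘(ℝ, E) z z ∈ t₀ := by
    refine ⟨(extChartAt 𝓘(ℝ, E) z).map_source (mem_extChartAt_source z), ?_⟩
    rw [mem_preimage, (extChartAt 𝓘(ℝ, E) z).left_inv (mem_extChartAt_source z)]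
    exact ⟨mem_extChartAt_source z, hz⟩
  have hB : ContMDiffAt 𝓘(ℝ, E) 𝓘(ℝ, E →L[ℝ] E) (⊤ : ℕ∞)
      (fun x => fderiv ℝ T (extChartAt 𝓘(ℝ, E) z x)) z := by
    have h1 : ContDiffAt ℝ (⊤ : ℕ∞) (fderiv ℝ T) (extChartAt 𝓘(ℝ, E) z z) :=
      hfT.contDiffAt (ht₀.mem_nhds hmemz)
    exact (contMDiffAt_iff_contDiffAt.2 h1).comp z contMDiffAt_extChartAt
  apply (hB.clm_apply hu_z).congr_of_eventuallyEq
  have hso : IsOpen ((extChartAt 𝓘(ℝ, E) z).source ∩ (extChartAt 𝓘(ℝ, E) x₀).source) :=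
    (isOpen_extChartAt_source z).inter (isOpen_extChartAt_source x₀)
  filter_upwards [hso.mem_nhds ⟨mem_extChartAt_source z, hz⟩] with x hx
  have e1 : (trivializationAt E (TangentSpace 𝓘(ℝ, E)) z ⟨x, X x⟩).2
      = tangentCoordChange 𝓘(ℝ, E) x z x (X x) := rfl
  have e2 : fderiv ℝ T (extChartAt 𝓘(ℝ, E) z x) = tangentCoordChange 𝓘(ℝ, E) z x₀ x := by
    simp only [tangentCoordChange_def, hT, modelWithCornersSelf_coe, Set.range_id,
      fderivWithin_univ]
  rw [mfderiv_extChartAt_eq hx.2, e1, e2]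
  exact (tangentCoordChange_comp (I := 𝓘(ℝ, E))
    ⟨⟨mem_extChartAt_source x, hx.1⟩, hx.2⟩ (v := X x)).symm

lemma contDiffAt_chartPushforward
    {X : (x : M) → TangentSpace 𝓘(ℝ, E) x}
    (hX : ContMDiff 𝓘(ℝ, E) 𝓘(ℝ, E).tangent (⊤ : ℕ∞)
      (fun x => (⟨x, X x⟩ : TangentBundle 𝓘(ℝ, E) M)))
    (x₀ : M) {y : E} (hy : y ∈ (extChartAt 𝓘(ℝ, E) x₀).target) :
    ContDiffAt ℝ (⊤ : ℕ∞) (chartPushforward x₀ X) y := by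
  rw [← contMDiffAt_iff_contDiffAt]
  have hz : (extChartAt 𝓘(ℝ, E) x₀).symm y ∈ (extChartAt 𝓘(ℝ, E) x₀).source :=
    (extChartAt 𝓘(ℝ, E) x₀).map_target hy
  have h2 : ContMDiffAt 𝓘(ℝ, E) 𝓘(ℝ, E) (⊤ : ℕ∞) (extChartAt 𝓘(ℝ, E) x₀).symm y :=
    (contMDiffOn_extChartAt_symm x₀).contMDiffAt ((isOpen_extChartAt_target x₀).mem_nhds hy)
  exact (contMDiffAt_mfderiv_chart_apply hX x₀ hz).comp y h2

lemma key_calc {g : E → ℝ} {V W : E → E} {a : E}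
    (hg : ContDiffAt ℝ (⊤ : ℕ∞) g a)
    (hV : DifferentiableAt ℝ V a) (hW : DifferentiableAt ℝ W a) :
    fderiv ℝ g a (VectorField.lieBracket ℝ V W a)
      = fderiv ℝ (fun y => fderiv ℝ g y (W y)) a (V a)
        - fderiv ℝ (fun y => fderiv ℝ g y (V y)) a (W a) := by
  have hsymm : IsSymmSndFDerivAt ℝ g a := hg.isSymmSndFDerivAt (by rw [minSmoothness_of_isRCLikeNormedField]; exact WithTop.coe_le_coe.2 (le_top : (2 : ℕ∞) ≤ ⊤))
  have hdg : DifferentiableAt ℝ (fderiv ℝ g) a :=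
    ((hg.fderiv_right (m := 1) (by norm_cast)).differentiableAt one_ne_zero)
  rw [fderiv_clm_apply hdg hW, fderiv_clm_apply hdg hV]
  simp only [ContinuousLinearMap.add_apply, ContinuousLinearMap.comp_apply,
    ContinuousLinearMap.flip_apply]
  rw [hsymm.eq (W a) (V a), VectorField.lieBracket, map_sub]
  abel

lemma mfderiv_rep {f : M → ℝ} (hf : ContMDiff 𝓘(ℝ, E) 𝓘(ℝ, ℝ) (⊤ : ℕ∞) f) (x₀ : M)
    {x : M} (hx : x ∈ (extChartAt 𝓘(ℝ, E) x₀).source) :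
    mfderiv 𝓘(ℝ, E) 𝓘(ℝ, ℝ) f x
      = (fderiv ℝ (f ∘ (extChartAt 𝓘(ℝ, E) x₀).symm) (extChartAt 𝓘(ℝ, E) x₀ x)).comp
        (mfderiv 𝓘(ℝ, E) 𝓘(ℝ, E) (extChartAt 𝓘(ℝ, E) x₀) x) := by
  have hy : extChartAt 𝓘(ℝ, E) x₀ x ∈ (extChartAt 𝓘(ℝ, E) x₀).target :=
    (extChartAt 𝓘(ℝ, E) x₀).map_source hx
  have hgm : ContMDiffAt 𝓘(ℝ, E) 𝓘(ℝ, ℝ) (⊤ : ℕ∞) (f ∘ (extChartAt 𝓘(ℝ, E) x₀).symm)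
      (extChartAt 𝓘(ℝ, E) x₀ x) := by
    refine (hf _).comp _ ?_
    exact (contMDiffOn_extChartAt_symm x₀).contMDiffAt
      ((isOpen_extChartAt_target x₀).mem_nhds hy)
  have hev : f =ᶠ[𝓝 x] (f ∘ (extChartAt 𝓘(ℝ, E) x₀).symm) ∘ (extChartAt 𝓘(ℝ, E) x₀) := by
    filter_upwards [(isOpen_extChartAt_source x₀).mem_nhds hx] with x' hx'
    simp only [Function.comp_apply, (extChartAt 𝓘(ℝ, E) x₀).left_inv hx']
  rw [hev.mfderiv_eq, mfderiv_comp x (hgm.mdifferentiableAt (by simp))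
    (mdifferentiableAt_extChartAt (by rwa [extChartAt_source] at hx)), mfderiv_eq_fderiv]
  rfl

lemma mfderiv_mLieBracket_apply
    {Δ X : (x : M) → TangentSpace 𝓘(ℝ, E) x}
    (hΔ : ContMDiff 𝓘(ℝ, E) 𝓘(ℝ, E).tangent (⊤ : ℕ∞)
      (fun x => (⟨x, Δ x⟩ : TangentBundle 𝓘(ℝ, E) M)))
    (hX : ContMDiff 𝓘(ℝ, E) 𝓘(ℝ, E).tangent (⊤ : ℕ∞)
      (fun x => (⟨x, X x⟩ : TangentBundle 𝓘(ℝ, E) M)))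
    {f : M → ℝ} (hf : ContMDiff 𝓘(ℝ, E) 𝓘(ℝ, ℝ) (⊤ : ℕ∞) f) (x₀ : M) :
    (mfderiv 𝓘(ℝ, E) 𝓘(ℝ, ℝ) f x₀ (mLieBracket Δ X x₀) : ℝ)
      = (show ℝ from
          mfderiv 𝓘(ℝ, E) 𝓘(ℝ, ℝ) (fun z => mfderiv 𝓘(ℝ, E) 𝓘(ℝ, ℝ) f z (X z)) x₀ (Δ x₀))
        - (show ℝ from
          mfderiv 𝓘(ℝ, E) 𝓘(ℝ, ℝ) (fun z => mfderiv 𝓘(ℝ, E) 𝓘(ℝ, ℝ) f z (Δ z)) x₀ (X x₀))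
    := by
  have hx₀ : x₀ ∈ (extChartAt 𝓘(ℝ, E) x₀).source := mem_extChartAt_source x₀
  have ha : extChartAt 𝓘(ℝ, E) x₀ x₀ ∈ (extChartAt 𝓘(ℝ, E) x₀).target :=
    (extChartAt 𝓘(ℝ, E) x₀).map_source hx₀
  have hga : ContDiffAt ℝ (⊤ : ℕ∞) (f ∘ (extChartAt 𝓘(ℝ, E) x₀).symm)
      (extChartAt 𝓘(ℝ, E) x₀ x₀) := by
    rw [← contMDiffAt_iff_contDiffAt]
    refine (hf _).comp _ ?_
    exact (contMDiffOn_extChartAt_symm x₀).contMDiffAt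
      ((isOpen_extChartAt_target x₀).mem_nhds ha)
  have hVd : DifferentiableAt ℝ (chartPushforward x₀ Δ) (extChartAt 𝓘(ℝ, E) x₀ x₀) :=
    (contDiffAt_chartPushforward hΔ x₀ ha).differentiableAt (by norm_cast)
  have hWd : DifferentiableAt ℝ (chartPushforward x₀ X) (extChartAt 𝓘(ℝ, E) x₀ x₀) :=
    (contDiffAt_chartPushforward hX x₀ ha).differentiableAt (by norm_cast)
  have hdg : DifferentiableAt ℝ (fderiv ℝ (f ∘ (extChartAt 𝓘(ℝ, E) x₀).symm))
      (extChartAt 𝓘(ℝ, E) x₀ x₀) :=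
    ((hga.fderiv_right (m := 1) (by norm_cast)).differentiableAt one_ne_zero)
  have main : ∀ (Y : (x : M) → TangentSpace 𝓘(ℝ, E) x) (P : E → E),
      DifferentiableAt ℝ P (extChartAt 𝓘(ℝ, E) x₀ x₀) →
      (∀ x ∈ (extChartAt 𝓘(ℝ, E) x₀).source,
        P (extChartAt 𝓘(ℝ, E) x₀ x) = mfderiv 𝓘(ℝ, E) 𝓘(ℝ, E) (extChartAt 𝓘(ℝ, E) x₀) x (Y x)) →
      mfderiv 𝓘(ℝ, E) 𝓘(ℝ, ℝ) (fun z => mfderiv 𝓘(ℝ, E) 𝓘(ℝ, ℝ) f z (Y z)) x₀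
        = (fderiv ℝ (fun y => fderiv ℝ (f ∘ (extChartAt 𝓘(ℝ, E) x₀).symm) y (P y))
            (extChartAt 𝓘(ℝ, E) x₀ x₀)).comp
          (mfderiv 𝓘(ℝ, E) 𝓘(ℝ, E) (extChartAt 𝓘(ℝ, E) x₀) x₀) := by
    intro Y P hP hrep
    have hh : DifferentiableAt ℝ
        (fun y => fderiv ℝ (f ∘ (extChartAt 𝓘(ℝ, E) x₀).symm) y (P y))
        (extChartAt 𝓘(ℝ, E) x₀ x₀) := hdg.clm_apply hP
    have hev : (fun z => (mfderiv 𝓘(ℝ, E) 𝓘(ℝ, ℝ) f z (Y z) : ℝ))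
        =ᶠ[𝓝 x₀] (fun y => fderiv ℝ (f ∘ (extChartAt 𝓘(ℝ, E) x₀).symm) y (P y))
          ∘ (extChartAt 𝓘(ℝ, E) x₀) := by
      filter_upwards [(isOpen_extChartAt_source x₀).mem_nhds hx₀] with x hx
      have h1 := mfderiv_rep hf x₀ hx
      simp only [Function.comp_apply]
      rw [h1, hrep x hx]
      rfl
    rw [hev.mfderiv_eq]
    have hcomp := mfderiv_comp (I := 𝓘(ℝ, E)) (I' := 𝓘(ℝ, E)) (I'' := 𝓘(ℝ, ℝ)) x₀
      (hh.mdifferentiableAt)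
      (mdifferentiableAt_extChartAt (I := 𝓘(ℝ, E)) (by rwa [extChartAt_source] at hx₀))
    rw [mfderiv_eq_fderiv] at hcomp
    exact hcomp
  have hDX := main X (chartPushforward x₀ X) hWd (fun x hx => chartPushforward_apply hx)
  have hDΔ := main Δ (chartPushforward x₀ Δ) hVd (fun x hx => chartPushforward_apply hx)

  have eB : (show ℝ from
      mfderiv 𝓘(ℝ, E) 𝓘(ℝ, ℝ) (fun z => mfderiv 𝓘(ℝ, E) 𝓘(ℝ, ℝ) f z (X z)) x₀ (Δ x₀))
      = fderiv ℝ (fun y => fderiv ℝ (f ∘ (extChartAt 𝓘(ℝ, E) x₀).symm) y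
          (chartPushforward x₀ X y)) (extChartAt 𝓘(ℝ, E) x₀ x₀)
          (chartPushforward x₀ Δ (extChartAt 𝓘(ℝ, E) x₀ x₀)) := by
    have h := DFunLike.congr_fun hDX (Δ x₀)
    exact h.trans (congrArg (fderiv ℝ (fun y => fderiv ℝ
      (f ∘ (extChartAt 𝓘(ℝ, E) x₀).symm) y (chartPushforward x₀ X y))
      (extChartAt 𝓘(ℝ, E) x₀ x₀)) (chartPushforward_apply hx₀).symm)
  have eC : (show ℝ from
      mfderiv 𝓘(ℝ, E) 𝓘(ℝ, ℝ) (fun z => mfderiv 𝓘(ℝ, E) 𝓘(ℝ, ℝ) f z (Δ z)) x₀ (X x₀))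
      = fderiv ℝ (fun y => fderiv ℝ (f ∘ (extChartAt 𝓘(ℝ, E) x₀).symm) y
          (chartPushforward x₀ Δ y)) (extChartAt 𝓘(ℝ, E) x₀ x₀)
          (chartPushforward x₀ X (extChartAt 𝓘(ℝ, E) x₀ x₀)) := by
    have h := DFunLike.congr_fun hDΔ (X x₀)
    exact h.trans (congrArg (fderiv ℝ (fun y => fderiv ℝ
      (f ∘ (extChartAt 𝓘(ℝ, E) x₀).symm) y (chartPushforward x₀ Δ y))
      (extChartAt 𝓘(ℝ, E) x₀ x₀)) (chartPushforward_apply hx₀).symm)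
  have eA : (mfderiv 𝓘(ℝ, E) 𝓘(ℝ, ℝ) f x₀ (mLieBracket Δ X x₀) : ℝ)
      = fderiv ℝ (f ∘ (extChartAt 𝓘(ℝ, E) x₀).symm) (extChartAt 𝓘(ℝ, E) x₀ x₀)
        (VectorField.lieBracket ℝ (chartPushforward x₀ Δ) (chartPushforward x₀ X)
          (extChartAt 𝓘(ℝ, E) x₀ x₀)) := by
    rw [mfderiv_rep hf x₀ hx₀]
    have h1 : mfderiv 𝓘(ℝ, E) 𝓘(ℝ, E) (extChartAt 𝓘(ℝ, E) x₀) x₀ (mLieBracket Δ X x₀)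
        = mLieBracket Δ X x₀ := mfderiv_extChartAt_self_apply x₀ _
    show fderiv ℝ (f ∘ (extChartAt 𝓘(ℝ, E) x₀).symm) (extChartAt 𝓘(ℝ, E) x₀ x₀)
        (mfderiv 𝓘(ℝ, E) 𝓘(ℝ, E) (extChartAt 𝓘(ℝ, E) x₀) x₀ (mLieBracket Δ X x₀)) = _
    rw [h1, mLieBracket_eq]
  rw [eA, eB, eC]
  exact key_calc hga hVd hWd
lemma lieBracket_pushforward {τ : E → E} {V W V' W' : E → E} {b : E}
    (hτ : ContDiffAt ℝ 2 τ b)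
    (hV : DifferentiableAt ℝ V b) (hW : DifferentiableAt ℝ W b)
    (hV' : DifferentiableAt ℝ V' (τ b)) (hW' : DifferentiableAt ℝ W' (τ b))
    (hVτ : ∀ᶠ y in 𝓝 b, V' (τ y) = fderiv ℝ τ y (V y))
    (hWτ : ∀ᶠ y in 𝓝 b, W' (τ y) = fderiv ℝ τ y (W y)) :
    VectorField.lieBracket ℝ V' W' (τ b) = fderiv ℝ τ b (VectorField.lieBracket ℝ V W b) := by
  have hsymm : IsSymmSndFDerivAt ℝ τ b := hτ.isSymmSndFDerivAt (by rw [minSmoothness_of_isRCLikeNormedField])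
  have hdτ : DifferentiableAt ℝ τ b := hτ.differentiableAt two_ne_zero
  have hfd : DifferentiableAt ℝ (fderiv ℝ τ) b :=
    (hτ.fderiv_right (m := 1) (by norm_num)).differentiableAt one_ne_zero
  have key : ∀ (P P' : E → E), DifferentiableAt ℝ P b → DifferentiableAt ℝ P' (τ b) →
      (∀ᶠ y in 𝓝 b, P' (τ y) = fderiv ℝ τ y (P y)) → ∀ v : E,
      fderiv ℝ P' (τ b) (fderiv ℝ τ b v)
        = fderiv ℝ (fderiv ℝ τ) b v (P b) + fderiv ℝ τ b (fderiv ℝ P b v) := by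
    intro P P' hP hP' hPτ v
    have c1 : fderiv ℝ (P' ∘ τ) b = (fderiv ℝ P' (τ b)).comp (fderiv ℝ τ b) :=
      fderiv_comp b hP' hdτ
    have c2 : fderiv ℝ (P' ∘ τ) b = fderiv ℝ (fun y => fderiv ℝ τ y (P y)) b :=
      Filter.EventuallyEq.fderiv_eq hPτ
    have c3 : fderiv ℝ (fun y => fderiv ℝ τ y (P y)) b
        = (fderiv ℝ τ b).comp (fderiv ℝ P b) + (fderiv ℝ (fderiv ℝ τ) b).flip (P b) :=
      fderiv_clm_apply hfd hP
    have := c1.symm.trans (c2.trans c3)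
    have h2 := congrArg (fun (L : E →L[ℝ] E) => L v) this
    simp only [ContinuousLinearMap.comp_apply, ContinuousLinearMap.add_apply,
      ContinuousLinearMap.flip_apply] at h2
    rw [h2]; abel
  have eV : V' (τ b) = fderiv ℝ τ b (V b) := hVτ.self_of_nhds
  have eW : W' (τ b) = fderiv ℝ τ b (W b) := hWτ.self_of_nhds
  rw [VectorField.lieBracket, VectorField.lieBracket, eV, eW,
    key V V' hV hV' hVτ (W b), key W W' hW hW' hWτ (V b), hsymm.eq (W b) (V b)]
  rw [map_sub]
  abel

lemma mLieBracket_rep {Δ X : (x : M) → TangentSpace 𝓘(ℝ, E) x}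
    (hΔ : ContMDiff 𝓘(ℝ, E) 𝓘(ℝ, E).tangent (⊤ : ℕ∞)
      (fun x => (⟨x, Δ x⟩ : TangentBundle 𝓘(ℝ, E) M)))
    (hX : ContMDiff 𝓘(ℝ, E) 𝓘(ℝ, E).tangent (⊤ : ℕ∞)
      (fun x => (⟨x, X x⟩ : TangentBundle 𝓘(ℝ, E) M)))
    {x₀ x : M} (hx : x ∈ (extChartAt 𝓘(ℝ, E) x₀).source) :
    mfderiv 𝓘(ℝ, E) 𝓘(ℝ, E) (extChartAt 𝓘(ℝ, E) x₀) x (mLieBracket Δ X x)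
      = VectorField.lieBracket ℝ (chartPushforward x₀ Δ) (chartPushforward x₀ X)
        (extChartAt 𝓘(ℝ, E) x₀ x) := by
  have hbx : x ∈ (extChartAt 𝓘(ℝ, E) x).source := mem_extChartAt_source x
  have hb : extChartAt 𝓘(ℝ, E) x x ∈ (extChartAt 𝓘(ℝ, E) x).target :=
    (extChartAt 𝓘(ℝ, E) x).map_source hbx
  set τ : E → E := (extChartAt 𝓘(ℝ, E) x₀) ∘ (extChartAt 𝓘(ℝ, E) x).symm with hτdef
  set t' : Set E := (extChartAt 𝓘(ℝ, E) x).target ∩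
    ((extChartAt 𝓘(ℝ, E) x).symm ⁻¹'
      ((extChartAt 𝓘(ℝ, E) x).source ∩ (extChartAt 𝓘(ℝ, E) x₀).source)) with ht'def
  have ht' : IsOpen t' :=
    (continuousOn_extChartAt_symm x).isOpen_inter_preimage (isOpen_extChartAt_target x)
      ((isOpen_extChartAt_source x).inter (isOpen_extChartAt_source x₀))
  have hbt' : extChartAt 𝓘(ℝ, E) x x ∈ t' := by
    refine ⟨hb, ?_⟩
    rw [mem_preimage, (extChartAt 𝓘(ℝ, E) x).left_inv hbx]
    exact ⟨hbx, hx⟩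
  have hτsm : ∀ y ∈ t', ContDiffAt ℝ (⊤ : ℕ∞) τ y := by
    intro y hy
    rw [← contMDiffAt_iff_contDiffAt]
    have h1 : ContMDiffAt 𝓘(ℝ, E) 𝓘(ℝ, E) (⊤ : ℕ∞) (extChartAt 𝓘(ℝ, E) x).symm y :=
      (contMDiffOn_extChartAt_symm x).contMDiffAt ((isOpen_extChartAt_target x).mem_nhds hy.1)
    have h2 : ContMDiffAt 𝓘(ℝ, E) 𝓘(ℝ, E) (⊤ : ℕ∞) (extChartAt 𝓘(ℝ, E) x₀)
        ((extChartAt 𝓘(ℝ, E) x).symm y) :=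
      contMDiffAt_extChartAt' (by
        have := hy.2.2
        rwa [extChartAt_source] at this)
    exact h2.comp y h1
  have hchain : ∀ z ∈ (extChartAt 𝓘(ℝ, E) x).source ∩ (extChartAt 𝓘(ℝ, E) x₀).source,
      mfderiv 𝓘(ℝ, E) 𝓘(ℝ, E) (extChartAt 𝓘(ℝ, E) x₀) z
        = (fderiv ℝ τ (extChartAt 𝓘(ℝ, E) x z)).comp
          (mfderiv 𝓘(ℝ, E) 𝓘(ℝ, E) (extChartAt 𝓘(ℝ, E) x) z) := by
    intro z hz
    have hzt' : extChartAt 𝓘(ℝ, E) x z ∈ t' := by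
      refine ⟨(extChartAt 𝓘(ℝ, E) x).map_source hz.1, ?_⟩
      rw [mem_preimage, (extChartAt 𝓘(ℝ, E) x).left_inv hz.1]
      exact hz
    have hev : (extChartAt 𝓘(ℝ, E) x₀ : M → E) =ᶠ[𝓝 z] τ ∘ (extChartAt 𝓘(ℝ, E) x) := by
      filter_upwards [(isOpen_extChartAt_source x).mem_nhds hz.1] with z' hz'
      simp only [Function.comp_apply, hτdef, (extChartAt 𝓘(ℝ, E) x).left_inv hz']
    have hτd : MDifferentiableAt 𝓘(ℝ, E) 𝓘(ℝ, E) τ (extChartAt 𝓘(ℝ, E) x z) :=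
      (contMDiffAt_iff_contDiffAt.2 (hτsm _ hzt')).mdifferentiableAt (by simp)
    rw [hev.mfderiv_eq, mfderiv_comp z hτd
      (mdifferentiableAt_extChartAt (by rw [extChartAt_source] at hz; exact hz.1)),
      mfderiv_eq_fderiv]
    rfl
  have hinter : ∀ (Y : (x' : M) → TangentSpace 𝓘(ℝ, E) x'),
      ∀ᶠ y in 𝓝 (extChartAt 𝓘(ℝ, E) x x),
        chartPushforward x₀ Y (τ y) = fderiv ℝ τ y (chartPushforward x Y y) := by
    intro Y
    filter_upwards [ht'.mem_nhds hbt'] with y hy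
    have hz := hy.2
    rw [mem_preimage] at hz
    have e1 : chartPushforward x₀ Y (τ y)
        = mfderiv 𝓘(ℝ, E) 𝓘(ℝ, E) (extChartAt 𝓘(ℝ, E) x₀) ((extChartAt 𝓘(ℝ, E) x).symm y)
          (Y ((extChartAt 𝓘(ℝ, E) x).symm y)) := chartPushforward_apply hz.2
    have e2 := DFunLike.congr_fun (hchain _ hz) (Y ((extChartAt 𝓘(ℝ, E) x).symm y))
    have hyy : extChartAt 𝓘(ℝ, E) x ((extChartAt 𝓘(ℝ, E) x).symm y) = y :=
      (extChartAt 𝓘(ℝ, E) x).right_inv hy.1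
    rw [e1, e2, hyy]
    rfl
  have hV : DifferentiableAt ℝ (chartPushforward x Δ) (extChartAt 𝓘(ℝ, E) x x) :=
    (contDiffAt_chartPushforward hΔ x hb).differentiableAt (by norm_cast)
  have hW : DifferentiableAt ℝ (chartPushforward x X) (extChartAt 𝓘(ℝ, E) x x) :=
    (contDiffAt_chartPushforward hX x hb).differentiableAt (by norm_cast)
  have hτb : τ (extChartAt 𝓘(ℝ, E) x x) = extChartAt 𝓘(ℝ, E) x₀ x := by
    simp only [hτdef, Function.comp_apply, (extChartAt 𝓘(ℝ, E) x).left_inv hbx]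
  have hV' : DifferentiableAt ℝ (chartPushforward x₀ Δ) (τ (extChartAt 𝓘(ℝ, E) x x)) := by
    rw [hτb]
    exact (contDiffAt_chartPushforward hΔ x₀
      ((extChartAt 𝓘(ℝ, E) x₀).map_source hx)).differentiableAt (by norm_cast)
  have hW' : DifferentiableAt ℝ (chartPushforward x₀ X) (τ (extChartAt 𝓘(ℝ, E) x x)) := by
    rw [hτb]
    exact (contDiffAt_chartPushforward hX x₀
      ((extChartAt 𝓘(ℝ, E) x₀).map_source hx)).differentiableAt (by norm_cast)
  have hpush := lieBracket_pushforward ((hτsm _ hbt').of_le (by norm_cast))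
    hV hW hV' hW' (hinter Δ) (hinter X)
  -- now assemble
  have hc := DFunLike.congr_fun (hchain x ⟨hbx, hx⟩) (mLieBracket Δ X x)
  rw [hc]
  have hself : mfderiv 𝓘(ℝ, E) 𝓘(ℝ, E) (extChartAt 𝓘(ℝ, E) x) x (mLieBracket Δ X x)
      = mLieBracket Δ X x := mfderiv_extChartAt_self_apply x _
  have step1 : ((fderiv ℝ τ (extChartAt 𝓘(ℝ, E) x x)).comp
        (mfderiv 𝓘(ℝ, E) 𝓘(ℝ, E) (extChartAt 𝓘(ℝ, E) x) x)) (mLieBracket Δ X x)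
      = fderiv ℝ τ (extChartAt 𝓘(ℝ, E) x x) (mLieBracket Δ X x) :=
    congrArg (fderiv ℝ τ (extChartAt 𝓘(ℝ, E) x x)) hself
  have final : (fderiv ℝ τ (extChartAt 𝓘(ℝ, E) x x)) (mLieBracket Δ X x)
      = VectorField.lieBracket ℝ (chartPushforward x₀ Δ) (chartPushforward x₀ X)
        (extChartAt 𝓘(ℝ, E) x₀ x) := by
    rw [mLieBracket_eq Δ X x, ← hτb]
    exact hpush.symm
  exact step1.trans final

theorem stmt_8' {Δ X : (x : M) → TangentSpace 𝓘(ℝ, E) x}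
    (hΔ : ContMDiff 𝓘(ℝ, E) 𝓘(ℝ, E).tangent (⊤ : ℕ∞)
      (fun x => (⟨x, Δ x⟩ : TangentBundle 𝓘(ℝ, E) M)))
    (hX : ContMDiff 𝓘(ℝ, E) 𝓘(ℝ, E).tangent (⊤ : ℕ∞)
      (fun x => (⟨x, X x⟩ : TangentBundle 𝓘(ℝ, E) M)))
    (n : ℝ)
    (hstrict : ∃ O : Set M, IsOpen O ∧ Dense O ∧ ∀ x ∈ O,
      Submodule.span ℝ
        {ℓ : TangentSpace 𝓘(ℝ, E) x →L[ℝ] ℝ |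
          ∃ f : M → ℝ, ContMDiff 𝓘(ℝ, E) 𝓘(ℝ, ℝ) (⊤ : ℕ∞) f ∧
            (∀ y : M, mfderiv 𝓘(ℝ, E) 𝓘(ℝ, ℝ) f y (Δ y) = f y) ∧
            ℓ = mfderiv 𝓘(ℝ, E) 𝓘(ℝ, ℝ) f x} = ⊤) :
    (∀ x : M, mLieBracket Δ X x = n • X x) ↔
    (∀ f : M → ℝ, ContMDiff 𝓘(ℝ, E) 𝓘(ℝ, ℝ) (⊤ : ℕ∞) f →
      (∀ y : M, mfderiv 𝓘(ℝ, E) 𝓘(ℝ, ℝ) f y (Δ y) = f y) →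
      ∀ y : M,
        mfderiv 𝓘(ℝ, E) 𝓘(ℝ, ℝ)
          (fun z : M => mfderiv 𝓘(ℝ, E) 𝓘(ℝ, ℝ) f z (X z)) y (Δ y)
          = (n + 1) • mfderiv 𝓘(ℝ, E) 𝓘(ℝ, ℝ) f y (X y)) := by
  constructor
  · intro h1 f hfs hfhom y
    have hfun : (fun z : M => (mfderiv 𝓘(ℝ, E) 𝓘(ℝ, ℝ) f z (Δ z) : ℝ)) = f :=
      funext fun z => hfhom z
    have hL := mfderiv_mLieBracket_apply hΔ hX hfs y
    rw [hfun, h1 y] at hL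
    have hsm : (mfderiv 𝓘(ℝ, E) 𝓘(ℝ, ℝ) f y) (n • X y)
        = n • ((mfderiv 𝓘(ℝ, E) 𝓘(ℝ, ℝ) f y) (X y)) := by
      exact (mfderiv 𝓘(ℝ, E) 𝓘(ℝ, ℝ) f y).map_smul n (X y)
    rw [hsm] at hL
    have hL2 : mfderiv 𝓘(ℝ, E) 𝓘(ℝ, ℝ)
        (fun z : M => mfderiv 𝓘(ℝ, E) 𝓘(ℝ, ℝ) f z (X z)) y (Δ y)
        = n • (mfderiv 𝓘(ℝ, E) 𝓘(ℝ, ℝ) f y (X y))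
          + mfderiv 𝓘(ℝ, E) 𝓘(ℝ, ℝ) f y (X y) := by
      have := sub_eq_iff_eq_add.mp hL.symm
      exact this
    rw [hL2, add_smul, one_smul]
  · intro h2
    obtain ⟨O, hOopen, hOdense, hspan⟩ := hstrict
    have hO : ∀ x ∈ O, mLieBracket Δ X x = n • X x := by
      intro x hxO
      have hv : ∀ ℓ : TangentSpace 𝓘(ℝ, E) x →L[ℝ] ℝ,
          ℓ (mLieBracket Δ X x - n • X x) = 0 := by
        intro ℓ
        have hmem : ℓ ∈ (⊤ : Submodule ℝ (TangentSpace 𝓘(ℝ, E) x →L[ℝ] ℝ)) := trivial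
        rw [← hspan x hxO] at hmem
        induction hmem using Submodule.span_induction with
        | mem ℓ' hℓ' =>
          obtain ⟨f, hfs, hfhom, rfl⟩ := hℓ'
          have hfun : (fun z : M => (mfderiv 𝓘(ℝ, E) 𝓘(ℝ, ℝ) f z (Δ z) : ℝ)) = f :=
            funext fun z => hfhom z
          have hL := mfderiv_mLieBracket_apply hΔ hX hfs x
          rw [hfun] at hL
          have hB := h2 f hfs hfhom x
          rw [hB] at hL
          have key2 : ∀ (L : TangentSpace 𝓘(ℝ, E) x →L[ℝ] ℝ)
              (v w : TangentSpace 𝓘(ℝ, E) x),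
              L v = (n + 1) • L w - L w → L (v - n • w) = 0 := by
            intro L v w h
            rw [map_sub, map_smul, h]
            simp only [smul_eq_mul]
            ring
          exact key2 _ _ _ hL
        | zero => simp
        | add a b ha hb hA hB => simp [ContinuousLinearMap.add_apply, hA, hB]
        | smul c a ha hA => simp [hA]
      have hzero : (show E from mLieBracket Δ X x - n • X x) = 0 :=
        NormedSpace.eq_zero_of_forall_dual_eq_zero ℝ (fun g => hv g)
      have : mLieBracket Δ X x - n • X x = 0 := hzero
      exact sub_eq_zero.mp this
    intro x₀
    have hx₀s : x₀ ∈ (extChartAt 𝓘(ℝ, E) x₀).source := mem_extChartAt_source x₀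
    have ha : extChartAt 𝓘(ℝ, E) x₀ x₀ ∈ (extChartAt 𝓘(ℝ, E) x₀).target :=
      (extChartAt 𝓘(ℝ, E) x₀).map_source hx₀s
    set F : M → E := fun x =>
      VectorField.lieBracket ℝ (chartPushforward x₀ Δ) (chartPushforward x₀ X)
        (extChartAt 𝓘(ℝ, E) x₀ x)
      - n • chartPushforward x₀ X (extChartAt 𝓘(ℝ, E) x₀ x) with hFdef
    have happ : ∀ {A : E → (E →L[ℝ] E)} {B : E → E} {p : E}, ContinuousAt A p →
        ContinuousAt B p → ContinuousAt (fun y => A y (B y)) p := by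
      intro A B p hA hB
      exact (isBoundedBilinearMap_apply.continuous.continuousAt).comp (hA.prodMk hB)
    have hVd := contDiffAt_chartPushforward hΔ x₀ ha
    have hWd := contDiffAt_chartPushforward hX x₀ ha
    have hVc : ContinuousAt (chartPushforward x₀ Δ) (extChartAt 𝓘(ℝ, E) x₀ x₀) :=
      (hVd.differentiableAt (by norm_cast)).continuousAt
    have hWc : ContinuousAt (chartPushforward x₀ X) (extChartAt 𝓘(ℝ, E) x₀ x₀) :=
      (hWd.differentiableAt (by norm_cast)).continuousAt
    have hdVc : ContinuousAt (fderiv ℝ (chartPushforward x₀ Δ)) (extChartAt 𝓘(ℝ, E) x₀ x₀) :=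
      (hVd.fderiv_right (m := 1) (by norm_cast)).continuousAt
    have hdWc : ContinuousAt (fderiv ℝ (chartPushforward x₀ X)) (extChartAt 𝓘(ℝ, E) x₀ x₀) :=
      (hWd.fderiv_right (m := 1) (by norm_cast)).continuousAt
    have hLc : ContinuousAt (VectorField.lieBracket ℝ (chartPushforward x₀ Δ)
        (chartPushforward x₀ X)) (extChartAt 𝓘(ℝ, E) x₀ x₀) := by
      rw [VectorField.lieBracket_eq]
      exact ((happ hdWc hVc).sub (happ hdVc hWc))
    have hFc : ContinuousAt F x₀ := by
      have hφ : ContinuousAt (extChartAt 𝓘(ℝ, E) x₀) x₀ := continuousAt_extChartAt x₀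
      exact ((hLc.comp hφ).sub ((hWc.comp hφ).const_smul n))
    have hF0 : ∀ x ∈ (extChartAt 𝓘(ℝ, E) x₀).source ∩ O, F x = 0 := by
      intro x hx
      have h1 := mLieBracket_rep hΔ hX hx.1
      have hsm : mfderiv 𝓘(ℝ, E) 𝓘(ℝ, E) (extChartAt 𝓘(ℝ, E) x₀) x (mLieBracket Δ X x)
          = n • (mfderiv 𝓘(ℝ, E) 𝓘(ℝ, E) (extChartAt 𝓘(ℝ, E) x₀) x (X x)) := by
        rw [hO x hx.2]
        exact (mfderiv 𝓘(ℝ, E) 𝓘(ℝ, E) (extChartAt 𝓘(ℝ, E) x₀) x).map_smul n (X x)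
      have h2' : VectorField.lieBracket ℝ (chartPushforward x₀ Δ) (chartPushforward x₀ X)
          (extChartAt 𝓘(ℝ, E) x₀ x)
          = n • (mfderiv 𝓘(ℝ, E) 𝓘(ℝ, E) (extChartAt 𝓘(ℝ, E) x₀) x (X x)) := by
        rw [← h1, hsm]
      have h3 : chartPushforward x₀ X (extChartAt 𝓘(ℝ, E) x₀ x)
          = mfderiv 𝓘(ℝ, E) 𝓘(ℝ, E) (extChartAt 𝓘(ℝ, E) x₀) x (X x) :=
        chartPushforward_apply hx.1
      show VectorField.lieBracket ℝ (chartPushforward x₀ Δ) (chartPushforward x₀ X)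
          (extChartAt 𝓘(ℝ, E) x₀ x)
        - n • chartPushforward x₀ X (extChartAt 𝓘(ℝ, E) x₀ x) = 0
      rw [h2', h3]
      exact sub_self _
    have hcl : x₀ ∈ closure ((extChartAt 𝓘(ℝ, E) x₀).source ∩ O) := by
      rw [mem_closure_iff]
      intro o ho hao
      obtain ⟨z, hz⟩ := hOdense.inter_open_nonempty
        (o ∩ (extChartAt 𝓘(ℝ, E) x₀).source)
        (ho.inter (isOpen_extChartAt_source x₀)) ⟨x₀, hao, hx₀s⟩
      exact ⟨z, hz.1.1, hz.1.2, hz.2⟩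
    have hF0' : F x₀ = 0 := by
      have hne : (𝓝[(extChartAt 𝓘(ℝ, E) x₀).source ∩ O] x₀).NeBot :=
        mem_closure_iff_nhdsWithin_neBot.1 hcl
      have h1 : Filter.Tendsto F (𝓝[(extChartAt 𝓘(ℝ, E) x₀).source ∩ O] x₀) (𝓝 (F x₀)) :=
        hFc.continuousWithinAt
      have h2' : Filter.Tendsto F (𝓝[(extChartAt 𝓘(ℝ, E) x₀).source ∩ O] x₀) (𝓝 0) := by
        refine Filter.Tendsto.congr' ?_ tendsto_const_nhds
        filter_upwards [self_mem_nhdsWithin] with z hz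
        exact (hF0 z hz).symm
      exact tendsto_nhds_unique h1 h2'
    have hFx₀ : F x₀ = mLieBracket Δ X x₀ - n • X x₀ := by
      show VectorField.lieBracket ℝ (chartPushforward x₀ Δ) (chartPushforward x₀ X)
          (extChartAt 𝓘(ℝ, E) x₀ x₀)
        - n • chartPushforward x₀ X (extChartAt 𝓘(ℝ, E) x₀ x₀)
        = mLieBracket Δ X x₀ - n • X x₀
      rw [← mLieBracket_eq, chartPushforward_apply hx₀s, mfderiv_extChartAt_self_apply]
      rfl
    rw [hFx₀] at hF0'
    exact sub_eq_zero.mp hF0'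

end

/-- Proposition 3.6 i) of the paper for `k = 1`: on a strict homogeneous structure
`(M, Δ)`, a smooth vector field `X` is `Δ`-homogeneous of degree `n`
(`[Δ, X] = n • X`) if and only if `X f` is `Δ`-homogeneous of degree `n + 1` for
every smooth `f` with `Δ f = f`. -/
theorem stmt_8 {E : Type*} [NormedAddCommGroup E] [NormedSpace ℝ E]
    {M : Type*} [TopologicalSpace M] [ChartedSpace E M]
    [IsManifold 𝓘(ℝ, E) (⊤ : ℕ∞) M]
    (Δ X : (x : M) → TangentSpace 𝓘(ℝ, E) x)
    (hΔ : ContMDiff 𝓘(ℝ, E) 𝓘(ℝ, E).tangent (⊤ : ℕ∞)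
      (fun x => (⟨x, Δ x⟩ : TangentBundle 𝓘(ℝ, E) M)))
    (hX : ContMDiff 𝓘(ℝ, E) 𝓘(ℝ, E).tangent (⊤ : ℕ∞)
      (fun x => (⟨x, X x⟩ : TangentBundle 𝓘(ℝ, E) M)))
    (n : ℝ)
    (hstrict : ∃ O : Set M, IsOpen O ∧ Dense O ∧ ∀ x ∈ O,
      Submodule.span ℝ
        {ℓ : TangentSpace 𝓘(ℝ, E) x →L[ℝ] ℝ |
          ∃ f : M → ℝ, ContMDiff 𝓘(ℝ, E) 𝓘(ℝ, ℝ) (⊤ : ℕ∞) f ∧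
            (∀ y : M, mfderiv 𝓘(ℝ, E) 𝓘(ℝ, ℝ) f y (Δ y) = f y) ∧
            ℓ = mfderiv 𝓘(ℝ, E) 𝓘(ℝ, ℝ) f x} = ⊤) :
    (∀ x : M, mLieBracket Δ X x = n • X x) ↔
    (∀ f : M → ℝ, ContMDiff 𝓘(ℝ, E) 𝓘(ℝ, ℝ) (⊤ : ℕ∞) f →
      (∀ y : M, mfderiv 𝓘(ℝ, E) 𝓘(ℝ, ℝ) f y (Δ y) = f y) →
      ∀ y : M,
        mfderiv 𝓘(ℝ, E) 𝓘(ℝ, ℝ)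
          (fun z : M => mfderiv 𝓘(ℝ, E) 𝓘(ℝ, ℝ) f z (X z)) y (Δ y)
          = (n + 1) • mfderiv 𝓘(ℝ, E) 𝓘(ℝ, ℝ) f y (X y)) :=
  stmt_8' hΔ hX n hstrict
end

section
/- Let H be a real normed vector space and M = H × ℝ. Let P, Q : M → H × ℝ be smooth vector fields which are ∂_s-homogeneous of degree 0, i.e., DP(m)[(0,1)] = 0 and DQ(m)[(0,1)] = 0 for all m ∈ M. Write P = (P₁,P₂) and define the reduced data on N = H: the vector field X_P(x) = P₁(x,0) and the function f_P(x) = P₂(x,0), and similarly X_Q, f_Q. Then the Lie bracket [P,Q](m) = DQ(m)[P(m)] − DP(m)[Q(m)] is again ∂_s-homogeneous of degree 0, and its reduced data are X_{[P,Q]} = [X_P, X_Q] and f_{[P,Q]} = X_P(f_Q) − X_Q(f_P), where X(f)(x) = Df(x)[X(x)]. -/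
section Aux
variable {H : Type*} [NormedAddCommGroup H] [NormedSpace ℝ H]

lemma aux_hom (P Q : H × ℝ → H × ℝ) (hP : ContDiff ℝ (⊤ : ℕ∞) P) (hQ : ContDiff ℝ (⊤ : ℕ∞) Q)
    (hPhom : ∀ m : H × ℝ, fderiv ℝ P m ((0 : H), (1 : ℝ)) = 0)
    (hQhom : ∀ m : H × ℝ, fderiv ℝ Q m ((0 : H), (1 : ℝ)) = 0)
    (m : H × ℝ) :
    HasFDerivAt (fun m' => fderiv ℝ Q m' (P m'))
      ((fderiv ℝ Q m).comp (fderiv ℝ P m) + ((fderiv ℝ (fderiv ℝ Q) m).flip (P m))) m ∧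
    ((fderiv ℝ Q m).comp (fderiv ℝ P m) + ((fderiv ℝ (fderiv ℝ Q) m).flip (P m)))
      ((0:H),(1:ℝ)) = 0 := by
  have hQ' : Differentiable ℝ (fderiv ℝ Q) :=
    (hQ.fderiv_right (m := 1) (WithTop.coe_le_coe.mpr le_top)).differentiable one_ne_zero
  have hQd : Differentiable ℝ Q := hQ.differentiable (by simp)
  have hPd : Differentiable ℝ P := hP.differentiable (by simp)
  refine ⟨(hQ'.differentiableAt.hasFDerivAt).clm_apply (hPd m).hasFDerivAt, ?_⟩
  have hsymm := second_derivative_symmetric (f' := fderiv ℝ Q) (x := m)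
    (fun y => (hQd y).hasFDerivAt) ((hQ' m).hasFDerivAt) (P m) ((0:H),(1:ℝ))
  have hz : HasFDerivAt (fun m' => fderiv ℝ Q m' ((0:H),(1:ℝ)))
      (((fderiv ℝ Q m).comp (0 : (H×ℝ) →L[ℝ] H×ℝ))
        + ((fderiv ℝ (fderiv ℝ Q) m).flip ((0:H),(1:ℝ)))) m :=
    (hQ'.differentiableAt.hasFDerivAt).clm_apply (hasFDerivAt_const _ _)
  have heq : (fun m' : H×ℝ => fderiv ℝ Q m' ((0:H),(1:ℝ))) = fun _ => (0 : H×ℝ) :=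
    funext hQhom
  rw [heq] at hz
  have hz2 := hz.unique (hasFDerivAt_const _ _)
  have h0 : fderiv ℝ (fderiv ℝ Q) m (P m) ((0:H),(1:ℝ)) = 0 := by
    have := congrArg (fun L => L (P m)) hz2
    simpa using this
  simp only [ContinuousLinearMap.add_apply, ContinuousLinearMap.comp_apply,
    ContinuousLinearMap.flip_apply, hPhom m, map_zero, zero_add]
  rw [← hsymm, h0]

lemma aux_slice (Q : H × ℝ → H × ℝ) (hQ : ContDiff ℝ (⊤ : ℕ∞) Q)
    (hQhom : ∀ m : H × ℝ, fderiv ℝ Q m ((0 : H), (1 : ℝ)) = 0)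
    (x : H) (a : H) (t : ℝ) :
    fderiv ℝ Q (x, 0) (a, t) = (fderiv ℝ (fun y : H => (Q (y,0)).1) x a,
      fderiv ℝ (fun y : H => (Q (y,0)).2) x a) := by
  have hQd : Differentiable ℝ Q := hQ.differentiable (by simp)
  have hι : HasFDerivAt (fun y : H => (y, (0:ℝ)))
      ((ContinuousLinearMap.id ℝ H).prod 0) x :=
    HasFDerivAt.prodMk (hasFDerivAt_id x) (hasFDerivAt_const _ _)
  have hc : HasFDerivAt (fun y : H => Q (y,0))
      ((fderiv ℝ Q (x,(0:ℝ))).comp ((ContinuousLinearMap.id ℝ H).prod 0)) x :=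
    (hQd (x,0)).hasFDerivAt.comp x hι
  have h1 : fderiv ℝ (fun y : H => (Q (y,0)).1) x a = (fderiv ℝ Q (x,0) (a,0)).1 := by
    rw [hc.fst.fderiv]; simp
  have h2 : fderiv ℝ (fun y : H => (Q (y,0)).2) x a = (fderiv ℝ Q (x,0) (a,0)).2 := by
    rw [hc.snd.fderiv]; simp
  have hat : ((a,t) : H × ℝ) = (a,0) + t • ((0:H),(1:ℝ)) := by
    simp [Prod.ext_iff]
  rw [h1, h2, hat, map_add, map_smul, hQhom]
  simp

end Aux

/-- Theorem 3.11 (b) for `k = 1` on the free model `N × ℝ = H × ℝ`: if `P`, `Q` are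
smooth vector fields which are `∂ₛ`-homogeneous of degree 0, then so is their Lie
bracket `[P,Q](m) = DQ(m)[P(m)] − DP(m)[Q(m)]`, and the reduced data of the bracket
are `X_{[P,Q]} = [X_P, X_Q]` and `f_{[P,Q]} = X_P(f_Q) − X_Q(f_P)`, where
`X_P(x) = P₁(x,0)` and `f_P(x) = P₂(x,0)`. -/
theorem stmt_13 {H : Type*} [NormedAddCommGroup H] [NormedSpace ℝ H]
    (P Q : H × ℝ → H × ℝ) (hP : ContDiff ℝ (⊤ : ℕ∞) P) (hQ : ContDiff ℝ (⊤ : ℕ∞) Q)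
    (hPhom : ∀ m : H × ℝ, fderiv ℝ P m ((0 : H), (1 : ℝ)) = 0)
    (hQhom : ∀ m : H × ℝ, fderiv ℝ Q m ((0 : H), (1 : ℝ)) = 0) :
    (∀ m : H × ℝ,
      fderiv ℝ (fun m' => fderiv ℝ Q m' (P m') - fderiv ℝ P m' (Q m')) m
        ((0 : H), (1 : ℝ)) = 0) ∧
    (∀ x : H,
      (fderiv ℝ Q (x, 0) (P (x, 0)) - fderiv ℝ P (x, 0) (Q (x, 0))).1
        = fderiv ℝ (fun y : H => (Q (y, 0)).1) x ((P (x, 0)).1)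
          - fderiv ℝ (fun y : H => (P (y, 0)).1) x ((Q (x, 0)).1)) ∧
    (∀ x : H,
      (fderiv ℝ Q (x, 0) (P (x, 0)) - fderiv ℝ P (x, 0) (Q (x, 0))).2
        = fderiv ℝ (fun y : H => (Q (y, 0)).2) x ((P (x, 0)).1)
          - fderiv ℝ (fun y : H => (P (y, 0)).2) x ((Q (x, 0)).1)) := by
  refine ⟨?_, ?_, ?_⟩
  · intro m
    have hg := aux_hom P Q hP hQ hPhom hQhom m
    have hh := aux_hom Q P hQ hP hQhom hPhom m
    have hsub := hg.1.sub hh.1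
    rw [(show HasFDerivAt (fun m' => fderiv ℝ Q m' (P m') - fderiv ℝ P m' (Q m')) _ m from hsub).fderiv]
    simp [ContinuousLinearMap.sub_apply, hg.2, hh.2]
  · intro x
    rw [aux_slice Q hQ hQhom x (P (x,0)).1 (P (x,0)).2,
        aux_slice P hP hPhom x (Q (x,0)).1 (Q (x,0)).2]
    simp
  · intro x
    rw [aux_slice Q hQ hQhom x (P (x,0)).1 (P (x,0)).2,
        aux_slice P hP hPhom x (Q (x,0)).1 (Q (x,0)).2]
    simp
end

section
/- Let d ∈ ℕ, N = Fin d → ℝ, and M = N × ℝ with points (x,s). Let a : M → Fin d → Fin d → ℝ and b : M → Fin d → ℝ be smooth with a(m) i j = −a(m) j i for all m, i, j. For smooth F, G : M → ℝ define {F,G}(m) = Σ_{i,j} a(m) i j · ∂ᵢF(m) · ∂ⱼG(m) + Σᵢ b(m) i · (∂ᵢF(m) · ∂_sG(m) − ∂_sF(m) · ∂ᵢG(m)), where ∂ᵢ denotes the directional derivative along (eᵢ,0) and ∂_s the directional derivative along (0,1). Assume: (homogeneity) ∂_s a(m) i j = −a(m) i j and ∂_s b(m) i = −b(m) i for all m,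 i, j; and (Poisson) the Jacobi identity {{F,G},H} + {{G,H},F} + {{H,F},G} = 0 holds for all smooth F, G, H : M → ℝ. Define the reduced bracket on N by {f,g}_N(x) = Σ_{i,j} a(x,0) i j · ∂ᵢf(x) · ∂ⱼg(x) + Σᵢ b(x,0) i · (∂ᵢf(x) · g(x) − f(x) · ∂ᵢg(x)). Then {·,·}_N satisfies the Jacobi identity {{f,g}_N,h}_N + {{g,h}_N,f}_N + {{h,f}_N,g}_N = 0 for all smooth f, g, h : N → ℝ. -/
open scoped BigOperators

/-- The bracket on `M = (Fin d → ℝ) × ℝ` determined by coefficients `a` (the `TN ⊗ TN`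
part) and `b` (the mixed `∂ᵢ ∧ ∂ₛ` part):
`{F,G}(m) = Σᵢⱼ a(m) i j ∂ᵢF ∂ⱼG + Σᵢ b(m) i (∂ᵢF ∂ₛG − ∂ₛF ∂ᵢG)`. -/
noncomputable def bracketM (d : ℕ)
    (a : (Fin d → ℝ) × ℝ → Fin d → Fin d → ℝ)
    (b : (Fin d → ℝ) × ℝ → Fin d → ℝ)
    (F G : (Fin d → ℝ) × ℝ → ℝ) : (Fin d → ℝ) × ℝ → ℝ :=
  fun m =>
    (∑ i : Fin d, ∑ j : Fin d,
      a m i j * fderiv ℝ F m (Pi.single i 1, 0) * fderiv ℝ G m (Pi.single j 1, 0))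
    + ∑ i : Fin d,
        b m i * (fderiv ℝ F m (Pi.single i 1, 0) * fderiv ℝ G m (0, 1)
          - fderiv ℝ F m (0, 1) * fderiv ℝ G m (Pi.single i 1, 0))

/-- The reduced (Jacobi) bracket on `N = Fin d → ℝ` with coefficients `a₀`, `b₀`:
`{f,g}_N(x) = Σᵢⱼ a₀(x) i j ∂ᵢf ∂ⱼg + Σᵢ b₀(x) i (∂ᵢf · g − f · ∂ᵢg)`. -/
noncomputable def bracketN (d : ℕ)
    (a₀ : (Fin d → ℝ) → Fin d → Fin d → ℝ)
    (b₀ : (Fin d → ℝ) → Fin d → ℝ)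
    (f g : (Fin d → ℝ) → ℝ) : (Fin d → ℝ) → ℝ :=
  fun x =>
    (∑ i : Fin d, ∑ j : Fin d,
      a₀ x i j * fderiv ℝ f x (Pi.single i 1) * fderiv ℝ g x (Pi.single j 1))
    + ∑ i : Fin d,
        b₀ x i * (fderiv ℝ f x (Pi.single i 1) * g x - f x * fderiv ℝ g x (Pi.single i 1))


/-- A smooth function on `M` whose `∂ₛ`-derivative is `-` itself scales as `exp (-s)`. -/
private lemma hom_val {d : ℕ} (c : (Fin d → ℝ) × ℝ → ℝ) (hc : ContDiff ℝ (⊤ : ℕ∞) c)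
    (hhom : ∀ m, fderiv ℝ c m (0, 1) = - c m) (x : Fin d → ℝ) (s : ℝ) :
    c (x, s) = Real.exp (-s) * c (x, 0) := by
  have hcurve : ∀ t : ℝ, HasDerivAt (fun t' => c (x, t')) (- c (x, t)) t := by
    intro t
    have hcv : HasDerivAt (fun t' : ℝ => ((x : Fin d → ℝ), t')) ((0 : Fin d → ℝ), (1:ℝ)) t :=
      HasDerivAt.prodMk (hasDerivAt_const t x) (hasDerivAt_id t)
    have := ((hc.differentiable (by simp) (x, t)).hasFDerivAt).comp_hasDerivAt t hcv
    rw [hhom (x, t)] at this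
    exact this
  have hphi : ∀ t : ℝ, HasDerivAt (fun t' => Real.exp t' * c (x, t')) 0 t := by
    intro t
    have := (Real.hasDerivAt_exp t).mul (hcurve t)
    exact this.congr_deriv (by ring)
  have hconst : Real.exp s * c (x, s) = Real.exp 0 * c (x, 0) :=
    is_const_of_deriv_eq_zero (fun t => (hphi t).differentiableAt)
      (fun t => (hphi t).deriv) s 0
  rw [Real.exp_zero, one_mul] at hconst
  rw [Real.exp_neg, ← hconst]
  field_simp

/-- Smoothness of the lift `(x,s) ↦ exp s * f x`. -/
private lemma smoothL {d : ℕ} {f : (Fin d → ℝ) → ℝ} (hf : ContDiff ℝ (⊤ : ℕ∞) f) :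
    ContDiff ℝ (⊤ : ℕ∞) (fun m : (Fin d → ℝ) × ℝ => Real.exp m.2 * f m.1) :=
  (Real.contDiff_exp.comp contDiff_snd).mul (hf.comp contDiff_fst)

/-- Derivative of the lift. -/
private lemma fderivL {d : ℕ} {f : (Fin d → ℝ) → ℝ} (hf : ContDiff ℝ (⊤ : ℕ∞) f)
    (m : (Fin d → ℝ) × ℝ) (v : Fin d → ℝ) (t : ℝ) :
    fderiv ℝ (fun m' : (Fin d → ℝ) × ℝ => Real.exp m'.2 * f m'.1) m (v, t)
      = Real.exp m.2 * f m.1 * t + Real.exp m.2 * fderiv ℝ f m.1 v := by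
  have h1 : HasFDerivAt (fun m' : (Fin d → ℝ) × ℝ => Real.exp m'.2)
      (Real.exp m.2 • (ContinuousLinearMap.snd ℝ (Fin d → ℝ) ℝ)) m :=
    (Real.hasDerivAt_exp m.2).comp_hasFDerivAt m (hasFDerivAt_snd)
  have h2 : HasFDerivAt (fun m' : (Fin d → ℝ) × ℝ => f m'.1)
      ((fderiv ℝ f m.1).comp (ContinuousLinearMap.fst ℝ (Fin d → ℝ) ℝ)) m :=
    ((hf.differentiable (by simp) m.1).hasFDerivAt).comp m (hasFDerivAt_fst)
  rw [HasFDerivAt.fderiv (f := fun m' : (Fin d → ℝ) × ℝ => Real.exp m'.2 * f m'.1) (h1.mul h2)]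
  simp
  ring

/-- Smoothness of the reduced bracket. -/
private lemma smoothN {d : ℕ} {a₀ : (Fin d → ℝ) → Fin d → Fin d → ℝ}
    {b₀ : (Fin d → ℝ) → Fin d → ℝ} {f g : (Fin d → ℝ) → ℝ}
    (ha₀ : ContDiff ℝ (⊤ : ℕ∞) a₀) (hb₀ : ContDiff ℝ (⊤ : ℕ∞) b₀)
    (hf : ContDiff ℝ (⊤ : ℕ∞) f) (hg : ContDiff ℝ (⊤ : ℕ∞) g) :
    ContDiff ℝ (⊤ : ℕ∞) (bracketN d a₀ b₀ f g) := by
  have hDf : ∀ i : Fin d, ContDiff ℝ (⊤ : ℕ∞) (fun x => fderiv ℝ f x (Pi.single i 1)) := fun i =>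
    (hf.fderiv_right (by simp)).clm_apply contDiff_const
  have hDg : ∀ i : Fin d, ContDiff ℝ (⊤ : ℕ∞) (fun x => fderiv ℝ g x (Pi.single i 1)) := fun i =>
    (hg.fderiv_right (by simp)).clm_apply contDiff_const
  unfold bracketN
  apply ContDiff.add
  · exact ContDiff.sum fun i _ => ContDiff.sum fun j _ =>
      ((contDiff_pi.mp (contDiff_pi.mp ha₀ i) j).mul (hDf i)).mul (hDg j)
  · exact ContDiff.sum fun i _ =>
      (contDiff_pi.mp hb₀ i).mul (((hDf i).mul hg).sub (hf.mul (hDg i)))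

/-- Poisson–Jacobi reduction (Dazord–Lichnerowicz–Marle; Remark 3.12 i), the `k = 2`
case of Theorem 3.11 in coordinates on the free model): a `∂ₛ`-homogeneous Poisson
bracket on `(Fin d → ℝ) × ℝ` reduces to a Jacobi bracket on `Fin d → ℝ`. -/
theorem stmt_15 (d : ℕ)
    (a : (Fin d → ℝ) × ℝ → Fin d → Fin d → ℝ)
    (b : (Fin d → ℝ) × ℝ → Fin d → ℝ)
    (ha : ContDiff ℝ (⊤ : ℕ∞) a) (hb : ContDiff ℝ (⊤ : ℕ∞) b)
    (hskew : ∀ m i j, a m i j = - a m j i)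
    (hahom : ∀ m i j, fderiv ℝ (fun m' => a m' i j) m (0, 1) = - a m i j)
    (hbhom : ∀ m i, fderiv ℝ (fun m' => b m' i) m (0, 1) = - b m i)
    (hjacobi : ∀ F G H : (Fin d → ℝ) × ℝ → ℝ,
      ContDiff ℝ (⊤ : ℕ∞) F → ContDiff ℝ (⊤ : ℕ∞) G → ContDiff ℝ (⊤ : ℕ∞) H →
      ∀ m, bracketM d a b (bracketM d a b F G) H m
        + bracketM d a b (bracketM d a b G H) F m
        + bracketM d a b (bracketM d a b H F) G m = 0) :
    ∀ f g h : (Fin d → ℝ) → ℝ,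
      ContDiff ℝ (⊤ : ℕ∞) f → ContDiff ℝ (⊤ : ℕ∞) g → ContDiff ℝ (⊤ : ℕ∞) h →
      ∀ x, bracketN d (fun y => a (y, 0)) (fun y => b (y, 0))
          (bracketN d (fun y => a (y, 0)) (fun y => b (y, 0)) f g) h x
        + bracketN d (fun y => a (y, 0)) (fun y => b (y, 0))
          (bracketN d (fun y => a (y, 0)) (fun y => b (y, 0)) g h) f x
        + bracketN d (fun y => a (y, 0)) (fun y => b (y, 0))
          (bracketN d (fun y => a (y, 0)) (fun y => b (y, 0)) h f) g x = 0 := by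
  have ha₀ : ContDiff ℝ (⊤ : ℕ∞) (fun y : Fin d → ℝ => a (y, 0)) :=
    ha.comp (contDiff_id.prodMk contDiff_const)
  have hb₀ : ContDiff ℝ (⊤ : ℕ∞) (fun y : Fin d → ℝ => b (y, 0)) :=
    hb.comp (contDiff_id.prodMk contDiff_const)
  have haval : ∀ (m : (Fin d → ℝ) × ℝ) i j,
      a m i j = Real.exp (-m.2) * a (m.1, 0) i j := by
    intro m i j
    have := hom_val (fun m' => a m' i j)
      (contDiff_pi.mp (contDiff_pi.mp ha i) j) (fun m' => hahom m' i j) m.1 m.2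
    simpa using this
  have hbval : ∀ (m : (Fin d → ℝ) × ℝ) i,
      b m i = Real.exp (-m.2) * b (m.1, 0) i := by
    intro m i
    have := hom_val (fun m' => b m' i)
      (contDiff_pi.mp hb i) (fun m' => hbhom m' i) m.1 m.2
    simpa using this
  -- key: the bracket of lifts is the lift of the reduced bracket
  have key : ∀ (f g : (Fin d → ℝ) → ℝ), ContDiff ℝ (⊤ : ℕ∞) f → ContDiff ℝ (⊤ : ℕ∞) g →
      bracketM d a b (fun m => Real.exp m.2 * f m.1) (fun m => Real.exp m.2 * g m.1)
        = fun m => Real.exp m.2 *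
            bracketN d (fun y => a (y, 0)) (fun y => b (y, 0)) f g m.1 := by
    intro f g hf hg
    funext m
    have hne : Real.exp m.2 ≠ 0 := Real.exp_ne_zero _
    unfold bracketM bracketN
    simp only [fderivL hf, fderivL hg, haval m, hbval m, map_zero, mul_zero, zero_add,
      mul_one, add_zero, Real.exp_neg, mul_add, Finset.mul_sum]
    congr 1
    · refine Finset.sum_congr rfl fun i _ => ?_
      refine Finset.sum_congr rfl fun j _ => ?_
      field_simp
    · refine Finset.sum_congr rfl fun i _ => ?_
      field_simp
  intro f g h hf hg hh x
  have hbfg := smoothN ha₀ hb₀ hf hg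
  have hbgh := smoothN ha₀ hb₀ hg hh
  have hbhf := smoothN ha₀ hb₀ hh hf
  have hJ := hjacobi (fun m => Real.exp m.2 * f m.1) (fun m => Real.exp m.2 * g m.1)
    (fun m => Real.exp m.2 * h m.1) (smoothL hf) (smoothL hg) (smoothL hh) (x, 0)
  rw [key f g hf hg, key g h hg hh, key h f hh hf,
    key _ h hbfg hh, key _ f hbgh hf, key _ g hbhf hg] at hJ
  simpa using hJ
end

section
/- Let d ∈ ℕ, N = Fin d → ℝ, and M = N × ℝ with points (x,s). Let a₀ : N → Fin d → Fin d → ℝ and b₀ : N → Fin d → ℝ be smooth with a₀(x) i j = −a₀(x) j i, and suppose that the bracket {f,g}_N(x) = Σ_{i,j} a₀(x) i j · ∂ᵢf(x) · ∂ⱼg(x) + Σᵢ b₀(x) i · (∂ᵢf(x) · g(x) − f(x) · ∂ᵢg(x)) satisfies the Jacobi identity for all smooth f, g, h : N → ℝ. Define a(x,s) = e^{−s} · a₀(x), b(x,s) = e^{−s} · b₀(x) and the bracket on M: {F,G}(m) = Σ_{i,j} a(m) i j · ∂ᵢF(m) · ∂ⱼG(m) + Σᵢ b(m) i · (∂ᵢF(m)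 · ∂_sG(m) − ∂_sF(m) · ∂ᵢG(m)), where ∂ᵢ denotes the directional derivative along (eᵢ,0) and ∂_s the directional derivative along (0,1). Then {·,·} satisfies the Jacobi identity {{F,G},H} + {{G,H},F} + {{H,F},G} = 0 for all smooth F, G, H : M → ℝ. -/
open scoped BigOperators

namespace Stmt16Aux

variable {d : ℕ}

abbrev MM (d : ℕ) := (Fin d → ℝ) × ℝ

noncomputable def evec (d : ℕ) : Option (Fin d) → MM d
  | none => (0, 1)
  | some i => (Pi.single i 1, 0)

noncomputable def Amat (a : MM d → Fin d → Fin d → ℝ) (b : MM d → Fin d → ℝ)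
    (m : MM d) : Option (Fin d) → Option (Fin d) → ℝ
  | some i, some j => a m i j
  | some i, none => b m i
  | none, some j => - b m j
  | none, none => 0

-- smoothness of x ↦ fderiv f x v
lemma contDiff_fderiv_apply {E : Type*} [NormedAddCommGroup E] [NormedSpace ℝ E]
    {f : E → ℝ} (hf : ContDiff ℝ (⊤ : ℕ∞) f) (v : E) :
    ContDiff ℝ (⊤ : ℕ∞) fun x => fderiv ℝ f x v :=
  (ContinuousLinearMap.apply ℝ ℝ v).contDiff.comp (hf.fderiv_right (by simp))

lemma fderiv_fderiv_apply {E : Type*} [NormedAddCommGroup E] [NormedSpace ℝ E]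
    {f : E → ℝ} (hf : ContDiff ℝ (⊤ : ℕ∞) f) (x v w : E) :
    fderiv ℝ (fun y => fderiv ℝ f y w) x v = fderiv ℝ (fderiv ℝ f) x v w := by
  have h1 : DifferentiableAt ℝ (fderiv ℝ f) x :=
    ((hf.fderiv_right (m := 1) (WithTop.coe_le_coe.mpr le_top)).differentiable one_ne_zero) x
  have h2 : HasFDerivAt (fun y => (ContinuousLinearMap.apply ℝ ℝ w) (fderiv ℝ f y))
      ((ContinuousLinearMap.apply ℝ ℝ w).comp (fderiv ℝ (fderiv ℝ f) x)) x :=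
    (ContinuousLinearMap.apply ℝ ℝ w).hasFDerivAt.comp x h1.hasFDerivAt
  have := h2.fderiv
  calc fderiv ℝ (fun y => fderiv ℝ f y w) x v
      = fderiv ℝ (fun y => (ContinuousLinearMap.apply ℝ ℝ w) (fderiv ℝ f y)) x v := rfl
    _ = fderiv ℝ (fderiv ℝ f) x v w := by rw [this]; rfl

lemma second_symm {E : Type*} [NormedAddCommGroup E] [NormedSpace ℝ E]
    {f : E → ℝ} (hf : ContDiff ℝ (⊤ : ℕ∞) f) (x v w : E) :
    fderiv ℝ (fderiv ℝ f) x v w = fderiv ℝ (fderiv ℝ f) x w v :=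
  second_derivative_symmetric (fun y => ((hf.differentiable (by simp)) y).hasFDerivAt)
    (((hf.fderiv_right (m := 1) (WithTop.coe_le_coe.mpr le_top)).differentiable one_ne_zero) x).hasFDerivAt v w

lemma fderiv_mul3 {E : Type*} [NormedAddCommGroup E] [NormedSpace ℝ E]
    {c u w : E → ℝ} {x : E} (hc : DifferentiableAt ℝ c x) (hu : DifferentiableAt ℝ u x)
    (hw : DifferentiableAt ℝ w x) (v : E) :
    fderiv ℝ (fun y => c y * u y * w y) x v =
      fderiv ℝ c x v * u x * w x + c x * fderiv ℝ u x v * w x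
        + c x * u x * fderiv ℝ w x v := by
  rw [fderiv_fun_mul (hc.fun_mul hu) hw, fderiv_fun_mul hc hu]
  simp only [ContinuousLinearMap.add_apply, ContinuousLinearMap.smul_apply, smul_eq_mul]
  ring

lemma bracketM_eq (a : MM d → Fin d → Fin d → ℝ) (b : MM d → Fin d → ℝ)
    (F G : MM d → ℝ) (m : MM d) :
    bracketM d a b F G m
      = ∑ p : Option (Fin d), ∑ q : Option (Fin d),
          Amat a b m p q * fderiv ℝ F m (evec d p) * fderiv ℝ G m (evec d q) := by
  simp only [Fintype.sum_option, Amat, evec, bracketM]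
  simp only [mul_sub, Finset.sum_sub_distrib, neg_mul, Finset.sum_neg_distrib, zero_mul,
    zero_add, Finset.sum_add_distrib]
  simp only [mul_comm, mul_left_comm, mul_assoc]
  ring

end Stmt16Aux

section Part2
namespace Stmt16Aux

variable {d : ℕ}

lemma contDiff_Amat {a : MM d → Fin d → Fin d → ℝ} {b : MM d → Fin d → ℝ}
    (ha : ∀ i j, ContDiff ℝ (⊤ : ℕ∞) fun m => a m i j) (hb : ∀ i, ContDiff ℝ (⊤ : ℕ∞) fun m => b m i)
    (p q : Option (Fin d)) : ContDiff ℝ (⊤ : ℕ∞) fun m => Amat a b m p q := by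
  cases p <;> cases q
  · simpa [Amat] using contDiff_const (c := (0:ℝ))
  · exact (hb _).neg
  · exact hb _
  · exact ha _ _

lemma contDiff_bracketM {a : MM d → Fin d → Fin d → ℝ} {b : MM d → Fin d → ℝ}
    (ha : ∀ i j, ContDiff ℝ (⊤ : ℕ∞) fun m => a m i j) (hb : ∀ i, ContDiff ℝ (⊤ : ℕ∞) fun m => b m i)
    {F G : MM d → ℝ} (hF : ContDiff ℝ (⊤ : ℕ∞) F) (hG : ContDiff ℝ (⊤ : ℕ∞) G) :
    ContDiff ℝ (⊤ : ℕ∞) (bracketM d a b F G) := by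
  have h : bracketM d a b F G = fun m => ∑ p : Option (Fin d), ∑ q : Option (Fin d),
      Amat a b m p q * fderiv ℝ F m (evec d p) * fderiv ℝ G m (evec d q) :=
    funext fun m => bracketM_eq a b F G m
  rw [h]
  apply ContDiff.sum; intro p _
  apply ContDiff.sum; intro q _
  exact ((contDiff_Amat ha hb p q).mul (contDiff_fderiv_apply hF _)).mul
    (contDiff_fderiv_apply hG _)

lemma fderiv_bracketM_left_zero {a : MM d → Fin d → Fin d → ℝ} {b : MM d → Fin d → ℝ}
    (ha : ∀ i j, ContDiff ℝ (⊤ : ℕ∞) fun m => a m i j) (hb : ∀ i, ContDiff ℝ (⊤ : ℕ∞) fun m => b m i)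
    {F G : MM d → ℝ} (hF : ContDiff ℝ (⊤ : ℕ∞) F) (hG : ContDiff ℝ (⊤ : ℕ∞) G) {m : MM d}
    (h0 : fderiv ℝ F m = 0) (v : MM d) :
    fderiv ℝ (bracketM d a b F G) m v
      = ∑ k : Option (Fin d), ∑ l : Option (Fin d),
          Amat a b m k l * fderiv ℝ (fderiv ℝ F) m v (evec d k)
            * fderiv ℝ G m (evec d l) := by
  have h : bracketM d a b F G = fun y => ∑ k : Option (Fin d), ∑ l : Option (Fin d),
      Amat a b y k l * fderiv ℝ F y (evec d k) * fderiv ℝ G y (evec d l) :=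
    funext fun y => bracketM_eq a b F G y
  have hdA : ∀ p q : Option (Fin d), DifferentiableAt ℝ (fun y => Amat a b y p q) m :=
    fun p q => ((contDiff_Amat ha hb p q).differentiable (by simp)) m
  have hdF : ∀ p : Option (Fin d),
      DifferentiableAt ℝ (fun y => fderiv ℝ F y (evec d p)) m :=
    fun p => ((contDiff_fderiv_apply hF _).differentiable (by simp)) m
  have hdG : ∀ p : Option (Fin d),
      DifferentiableAt ℝ (fun y => fderiv ℝ G y (evec d p)) m :=
    fun p => ((contDiff_fderiv_apply hG _).differentiable (by simp)) m
  have hterm : ∀ k l : Option (Fin d), DifferentiableAt ℝ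
      (fun y => Amat a b y k l * fderiv ℝ F y (evec d k) * fderiv ℝ G y (evec d l)) m :=
    fun k l => ((hdA k l).mul (hdF k)).mul (hdG l)
  rw [h, fderiv_fun_sum (fun k _ => DifferentiableAt.fun_sum (fun l _ => hterm k l))]
  rw [ContinuousLinearMap.sum_apply]
  refine Finset.sum_congr rfl fun k _ => ?_
  rw [fderiv_fun_sum (fun l _ => hterm k l), ContinuousLinearMap.sum_apply]
  refine Finset.sum_congr rfl fun l _ => ?_
  rw [fderiv_mul3 (hdA k l) (hdF k) (hdG l) v]
  rw [fderiv_fderiv_apply hF m v (evec d k)]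
  simp [h0]

lemma fderiv_bracketM_right_zero {a : MM d → Fin d → Fin d → ℝ} {b : MM d → Fin d → ℝ}
    (ha : ∀ i j, ContDiff ℝ (⊤ : ℕ∞) fun m => a m i j) (hb : ∀ i, ContDiff ℝ (⊤ : ℕ∞) fun m => b m i)
    {F G : MM d → ℝ} (hF : ContDiff ℝ (⊤ : ℕ∞) F) (hG : ContDiff ℝ (⊤ : ℕ∞) G) {m : MM d}
    (h0 : fderiv ℝ G m = 0) (v : MM d) :
    fderiv ℝ (bracketM d a b F G) m v
      = ∑ k : Option (Fin d), ∑ l : Option (Fin d),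
          Amat a b m k l * fderiv ℝ F m (evec d k)
            * fderiv ℝ (fderiv ℝ G) m v (evec d l) := by
  have h : bracketM d a b F G = fun y => ∑ k : Option (Fin d), ∑ l : Option (Fin d),
      Amat a b y k l * fderiv ℝ F y (evec d k) * fderiv ℝ G y (evec d l) :=
    funext fun y => bracketM_eq a b F G y
  have hdA : ∀ p q : Option (Fin d), DifferentiableAt ℝ (fun y => Amat a b y p q) m :=
    fun p q => ((contDiff_Amat ha hb p q).differentiable (by simp)) m
  have hdF : ∀ p : Option (Fin d),
      DifferentiableAt ℝ (fun y => fderiv ℝ F y (evec d p)) m :=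
    fun p => ((contDiff_fderiv_apply hF _).differentiable (by simp)) m
  have hdG : ∀ p : Option (Fin d),
      DifferentiableAt ℝ (fun y => fderiv ℝ G y (evec d p)) m :=
    fun p => ((contDiff_fderiv_apply hG _).differentiable (by simp)) m
  have hterm : ∀ k l : Option (Fin d), DifferentiableAt ℝ
      (fun y => Amat a b y k l * fderiv ℝ F y (evec d k) * fderiv ℝ G y (evec d l)) m :=
    fun k l => ((hdA k l).mul (hdF k)).mul (hdG l)
  rw [h, fderiv_fun_sum (fun k _ => DifferentiableAt.fun_sum (fun l _ => hterm k l))]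
  rw [ContinuousLinearMap.sum_apply]
  refine Finset.sum_congr rfl fun k _ => ?_
  rw [fderiv_fun_sum (fun l _ => hterm k l), ContinuousLinearMap.sum_apply]
  refine Finset.sum_congr rfl fun l _ => ?_
  rw [fderiv_mul3 (hdA k l) (hdF k) (hdG l) v]
  rw [fderiv_fderiv_apply hG m v (evec d l)]
  simp [h0]

lemma sum_antisymm {ι : Type*} [Fintype ι] (f : ι → ι → ℝ)
    (hf : ∀ p k, f k p = - f p k) :
    ∑ p : ι, ∑ k : ι, f p k = 0 := by
  have h : ∑ p : ι, ∑ k : ι, f p k = - ∑ p : ι, ∑ k : ι, f p k := by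
    calc ∑ p : ι, ∑ k : ι, f p k = ∑ k : ι, ∑ p : ι, f p k := Finset.sum_comm
      _ = ∑ k : ι, ∑ p : ι, - f k p := by
          refine Finset.sum_congr rfl fun k _ => Finset.sum_congr rfl fun p _ => ?_
          rw [← hf k p]
      _ = - ∑ k : ι, ∑ p : ι, f k p := by
          simp [Finset.sum_neg_distrib]
      _ = - ∑ p : ι, ∑ k : ι, f p k := rfl
  linarith

lemma quad_cancel {ι : Type*} [Fintype ι] (A : ι → ι → ℝ) (S : ι → ι → ℝ) (g h : ι → ℝ)
    (hA : ∀ p q, A p q = - A q p) (hS : ∀ p q, S p q = S q p) :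
    (∑ p : ι, ∑ q : ι, A p q * (∑ k : ι, ∑ l : ι, A k l * S p k * g l) * h q)
    + (∑ p : ι, ∑ q : ι, A p q * (∑ k : ι, ∑ l : ι, A k l * h k * S p l) * g q) = 0 := by
  have e1 : ∀ p : ι, (∑ q : ι, A p q * (∑ k : ι, ∑ l : ι, A k l * S p k * g l) * h q)
      = ∑ k : ι, ∑ q : ι, ∑ l : ι, A p q * A k l * S p k * g l * h q := by
    intro p
    have step : ∀ q : ι, A p q * (∑ k : ι, ∑ l : ι, A k l * S p k * g l) * h q
        = ∑ k : ι, ∑ l : ι, A p q * A k l * S p k * g l * h q := by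
      intro q
      rw [Finset.mul_sum, Finset.sum_mul]
      refine Finset.sum_congr rfl fun k _ => ?_
      rw [Finset.mul_sum, Finset.sum_mul]
      refine Finset.sum_congr rfl fun l _ => ?_
      ring
    calc (∑ q : ι, A p q * (∑ k : ι, ∑ l : ι, A k l * S p k * g l) * h q)
        = ∑ q : ι, ∑ k : ι, ∑ l : ι, A p q * A k l * S p k * g l * h q :=
          Finset.sum_congr rfl fun q _ => step q
      _ = ∑ k : ι, ∑ q : ι, ∑ l : ι, A p q * A k l * S p k * g l * h q := Finset.sum_comm
  have e2 : ∀ p : ι, (∑ q : ι, A p q * (∑ k : ι, ∑ l : ι, A k l * h k * S p l) * g q)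
      = ∑ k : ι, ∑ q : ι, ∑ l : ι, A p q * A l k * h l * S p k * g q := by
    intro p
    have step : ∀ q : ι, A p q * (∑ k : ι, ∑ l : ι, A k l * h k * S p l) * g q
        = ∑ k : ι, ∑ l : ι, A p q * A l k * h l * S p k * g q := by
      intro q
      calc A p q * (∑ k : ι, ∑ l : ι, A k l * h k * S p l) * g q
          = ∑ k : ι, ∑ l : ι, A p q * A k l * h k * S p l * g q := by
            rw [Finset.mul_sum, Finset.sum_mul]
            refine Finset.sum_congr rfl fun k _ => ?_
            rw [Finset.mul_sum, Finset.sum_mul]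
            refine Finset.sum_congr rfl fun l _ => ?_
            ring
        _ = ∑ k : ι, ∑ l : ι, A p q * A l k * h l * S p k * g q := Finset.sum_comm
    calc (∑ q : ι, A p q * (∑ k : ι, ∑ l : ι, A k l * h k * S p l) * g q)
        = ∑ q : ι, ∑ k : ι, ∑ l : ι, A p q * A l k * h l * S p k * g q :=
          Finset.sum_congr rfl fun q _ => step q
      _ = ∑ k : ι, ∑ q : ι, ∑ l : ι, A p q * A l k * h l * S p k * g q := Finset.sum_comm
  have key : ∀ p k : ι,
      ((∑ q : ι, ∑ l : ι, A k q * A p l * S k p * g l * h q)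
        + (∑ q : ι, ∑ l : ι, A k q * A l p * h l * S k p * g q))
      = - ((∑ q : ι, ∑ l : ι, A p q * A k l * S p k * g l * h q)
        + (∑ q : ι, ∑ l : ι, A p q * A l k * h l * S p k * g q)) := by
    intro p k
    have k1 : (∑ q : ι, ∑ l : ι, A k q * A p l * S k p * g l * h q)
        = - (∑ q : ι, ∑ l : ι, A p q * A l k * h l * S p k * g q) := by
      rw [Finset.sum_comm, ← Finset.sum_neg_distrib]
      refine Finset.sum_congr rfl fun q _ => ?_
      rw [← Finset.sum_neg_distrib]
      refine Finset.sum_congr rfl fun l _ => ?_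
      rw [hA l k, hS k p]
      ring
    have k2 : (∑ q : ι, ∑ l : ι, A k q * A l p * h l * S k p * g q)
        = - (∑ q : ι, ∑ l : ι, A p q * A k l * S p k * g l * h q) := by
      rw [Finset.sum_comm, ← Finset.sum_neg_distrib]
      refine Finset.sum_congr rfl fun q _ => ?_
      rw [← Finset.sum_neg_distrib]
      refine Finset.sum_congr rfl fun l _ => ?_
      rw [hA q p, hS k p]
      ring
    rw [k1, k2]
    ring
  calc (∑ p : ι, ∑ q : ι, A p q * (∑ k : ι, ∑ l : ι, A k l * S p k * g l) * h q)
      + (∑ p : ι, ∑ q : ι, A p q * (∑ k : ι, ∑ l : ι, A k l * h k * S p l) * g q)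
      = ∑ p : ι, ((∑ k : ι, ∑ q : ι, ∑ l : ι, A p q * A k l * S p k * g l * h q)
        + (∑ k : ι, ∑ q : ι, ∑ l : ι, A p q * A l k * h l * S p k * g q)) := by
        rw [← Finset.sum_add_distrib]
        exact Finset.sum_congr rfl fun p _ => by rw [e1 p, e2 p]
    _ = ∑ p : ι, ∑ k : ι, ((∑ q : ι, ∑ l : ι, A p q * A k l * S p k * g l * h q)
        + (∑ q : ι, ∑ l : ι, A p q * A l k * h l * S p k * g q)) := by
        refine Finset.sum_congr rfl fun p _ => ?_
        rw [← Finset.sum_add_distrib]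
    _ = 0 := sum_antisymm _ key

end Stmt16Aux
end Part2
section Part3
namespace Stmt16Aux

variable {d : ℕ}

noncomputable def jacM (a : MM d → Fin d → Fin d → ℝ) (b : MM d → Fin d → ℝ)
    (F G H : MM d → ℝ) (m : MM d) : ℝ :=
  bracketM d a b (bracketM d a b F G) H m + bracketM d a b (bracketM d a b G H) F m
    + bracketM d a b (bracketM d a b H F) G m

lemma jacM_cyc (a : MM d → Fin d → Fin d → ℝ) (b : MM d → Fin d → ℝ)
    (F G H : MM d → ℝ) (m : MM d) : jacM a b F G H m = jacM a b G H F m := by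
  unfold jacM; ring

lemma jacM_zero {a : MM d → Fin d → Fin d → ℝ} {b : MM d → Fin d → ℝ}
    (ha : ∀ i j, ContDiff ℝ (⊤ : ℕ∞) fun m => a m i j) (hb : ∀ i, ContDiff ℝ (⊤ : ℕ∞) fun m => b m i)
    (hAskew : ∀ m (p q : Option (Fin d)), Amat a b m p q = - Amat a b m q p)
    {F G H : MM d → ℝ} (hF : ContDiff ℝ (⊤ : ℕ∞) F) (hG : ContDiff ℝ (⊤ : ℕ∞) G) (hH : ContDiff ℝ (⊤ : ℕ∞) H)
    {m : MM d} (h0 : fderiv ℝ F m = 0) : jacM a b F G H m = 0 := by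
  unfold jacM
  rw [bracketM_eq a b (bracketM d a b F G) H m,
      bracketM_eq a b (bracketM d a b G H) F m,
      bracketM_eq a b (bracketM d a b H F) G m]
  simp only [fderiv_bracketM_left_zero ha hb hF hG h0,
    fderiv_bracketM_right_zero ha hb hH hF h0, h0, ContinuousLinearMap.zero_apply,
    mul_zero, Finset.sum_const_zero, add_zero]
  exact quad_cancel (Amat a b m) (fun p k => fderiv ℝ (fderiv ℝ F) m (evec d p) (evec d k))
    (fun l => fderiv ℝ G m (evec d l)) (fun q => fderiv ℝ H m (evec d q))
    (hAskew m) (fun p k => second_symm hF m (evec d p) (evec d k))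

lemma bracketM_sub_left (a : MM d → Fin d → Fin d → ℝ) (b : MM d → Fin d → ℝ)
    (F F' G : MM d → ℝ) (hF : Differentiable ℝ F) (hF' : Differentiable ℝ F') :
    bracketM d a b (fun y => F y - F' y) G
      = fun y => bracketM d a b F G y - bracketM d a b F' G y := by
  funext y
  have hs : fderiv ℝ (fun z => F z - F' z) y = fderiv ℝ F y - fderiv ℝ F' y :=
    fderiv_sub (hF y) (hF' y)
  simp only [bracketM, hs, ContinuousLinearMap.sub_apply, mul_sub, sub_mul,
    Finset.sum_sub_distrib]
  ring

lemma bracketM_sub_right (a : MM d → Fin d → Fin d → ℝ) (b : MM d → Fin d → ℝ)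
    (F G G' : MM d → ℝ) (hG : Differentiable ℝ G) (hG' : Differentiable ℝ G') :
    bracketM d a b F (fun y => G y - G' y)
      = fun y => bracketM d a b F G y - bracketM d a b F G' y := by
  funext y
  have hs : fderiv ℝ (fun z => G z - G' z) y = fderiv ℝ G y - fderiv ℝ G' y :=
    fderiv_sub (hG y) (hG' y)
  simp only [bracketM, hs, ContinuousLinearMap.sub_apply, mul_sub, sub_mul,
    Finset.sum_sub_distrib]
  ring

lemma jacM_congr_left {a : MM d → Fin d → Fin d → ℝ} {b : MM d → Fin d → ℝ}
    (ha : ∀ i j, ContDiff ℝ (⊤ : ℕ∞) fun m => a m i j) (hb : ∀ i, ContDiff ℝ (⊤ : ℕ∞) fun m => b m i)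
    (hAskew : ∀ m (p q : Option (Fin d)), Amat a b m p q = - Amat a b m q p)
    {F F' G H : MM d → ℝ} (hF : ContDiff ℝ (⊤ : ℕ∞) F) (hF' : ContDiff ℝ (⊤ : ℕ∞) F')
    (hG : ContDiff ℝ (⊤ : ℕ∞) G) (hH : ContDiff ℝ (⊤ : ℕ∞) H)
    {m : MM d} (he : fderiv ℝ F m = fderiv ℝ F' m) :
    jacM a b F G H m = jacM a b F' G H m := by
  have hFd := hF.differentiable (by simp)
  have hF'd := hF'.differentiable (by simp)
  have h0 : fderiv ℝ (fun y => F y - F' y) m = 0 := by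
    rw [fderiv_fun_sub (hFd m) (hF'd m), he, sub_self]
  have hsub : ContDiff ℝ (⊤ : ℕ∞) (fun y => F y - F' y) := hF.sub hF'
  have hz := jacM_zero ha hb hAskew hsub hG hH h0
  unfold jacM at hz
  rw [bracketM_sub_left a b F F' G hFd hF'd,
      bracketM_sub_right a b H F F' hFd hF'd,
      bracketM_sub_left a b (bracketM d a b F G) (bracketM d a b F' G) H
        ((contDiff_bracketM ha hb hF hG).differentiable (by simp))
        ((contDiff_bracketM ha hb hF' hG).differentiable (by simp)),
      bracketM_sub_right a b (bracketM d a b G H) F F' hFd hF'd,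
      bracketM_sub_left a b (bracketM d a b H F) (bracketM d a b H F') G
        ((contDiff_bracketM ha hb hH hF).differentiable (by simp))
        ((contDiff_bracketM ha hb hH hF').differentiable (by simp))] at hz
  simp only at hz
  unfold jacM
  linarith

end Stmt16Aux
end Part3
section Part4
namespace Stmt16Aux

variable {d : ℕ}

noncomputable def liftF (f : (Fin d → ℝ) → ℝ) : MM d → ℝ :=
  fun m => Real.exp m.2 * f m.1

lemma contDiff_liftF {f : (Fin d → ℝ) → ℝ} (hf : ContDiff ℝ (⊤ : ℕ∞) f) :
    ContDiff ℝ (⊤ : ℕ∞) (liftF f) :=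
  (Real.contDiff_exp.comp contDiff_snd).mul (hf.comp contDiff_fst)

lemma fderiv_liftF {f : (Fin d → ℝ) → ℝ} (hf : ContDiff ℝ (⊤ : ℕ∞) f) (m : MM d) (v : MM d) :
    fderiv ℝ (liftF f) m v
      = Real.exp m.2 * fderiv ℝ f m.1 v.1 + f m.1 * (Real.exp m.2 * v.2) := by
  have h1 : HasFDerivAt (fun m : MM d => Real.exp m.2)
      ((ContinuousLinearMap.smulRight (1 : ℝ →L[ℝ] ℝ) (Real.exp m.2)).comp
        (ContinuousLinearMap.snd ℝ (Fin d → ℝ) ℝ)) m :=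
    (Real.hasDerivAt_exp m.2).hasFDerivAt.comp m hasFDerivAt_snd
  have h2 : HasFDerivAt (fun m : MM d => f m.1)
      ((fderiv ℝ f m.1).comp (ContinuousLinearMap.fst ℝ (Fin d → ℝ) ℝ)) m :=
    ((hf.differentiable (by simp) m.1).hasFDerivAt).comp m hasFDerivAt_fst
  have h3 := h1.fun_mul h2
  unfold liftF
  rw [h3.fderiv]
  simp only [ContinuousLinearMap.add_apply, ContinuousLinearMap.smul_apply,
    ContinuousLinearMap.coe_comp', Function.comp_apply, ContinuousLinearMap.coe_fst',
    ContinuousLinearMap.coe_snd', ContinuousLinearMap.smulRight_apply,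
    ContinuousLinearMap.one_apply, smul_eq_mul]
  ring

end Stmt16Aux
end Part4
section Part5
namespace Stmt16Aux

variable {d : ℕ}

lemma contDiff_bracketN {a₀ : (Fin d → ℝ) → Fin d → Fin d → ℝ}
    {b₀ : (Fin d → ℝ) → Fin d → ℝ}
    (ha₀ : ContDiff ℝ (⊤ : ℕ∞) a₀) (hb₀ : ContDiff ℝ (⊤ : ℕ∞) b₀)
    {f g : (Fin d → ℝ) → ℝ} (hf : ContDiff ℝ (⊤ : ℕ∞) f) (hg : ContDiff ℝ (⊤ : ℕ∞) g) :
    ContDiff ℝ (⊤ : ℕ∞) (bracketN d a₀ b₀ f g) := by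
  have ha : ∀ i j, ContDiff ℝ (⊤ : ℕ∞) fun x => a₀ x i j := fun i j =>
    contDiff_pi.mp (contDiff_pi.mp ha₀ i) j
  have hb : ∀ i, ContDiff ℝ (⊤ : ℕ∞) fun x => b₀ x i := fun i => contDiff_pi.mp hb₀ i
  unfold bracketN
  apply ContDiff.add
  · apply ContDiff.sum; intro i _
    apply ContDiff.sum; intro j _
    exact ((ha i j).mul (contDiff_fderiv_apply hf _)).mul (contDiff_fderiv_apply hg _)
  · apply ContDiff.sum; intro i _
    exact (hb i).mul (((contDiff_fderiv_apply hf _).mul hg).sub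
      (hf.mul (contDiff_fderiv_apply hg _)))

lemma bracket_lift (a₀ : (Fin d → ℝ) → Fin d → Fin d → ℝ) (b₀ : (Fin d → ℝ) → Fin d → ℝ)
    {f g : (Fin d → ℝ) → ℝ} (hf : ContDiff ℝ (⊤ : ℕ∞) f) (hg : ContDiff ℝ (⊤ : ℕ∞) g) :
    bracketM d (fun m' => Real.exp (-m'.2) • a₀ m'.1) (fun m' => Real.exp (-m'.2) • b₀ m'.1)
      (liftF f) (liftF g) = liftF (bracketN d a₀ b₀ f g) := by
  funext m
  have hexp : Real.exp (-m.2) * Real.exp m.2 = 1 := by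
    rw [← Real.exp_add]; simp
  simp only [bracketM, bracketN, liftF, fderiv_liftF hf, fderiv_liftF hg]
  simp only [Pi.smul_apply, smul_eq_mul, map_zero, mul_zero, add_zero, zero_add, mul_one]
  rw [mul_add, Finset.mul_sum, Finset.mul_sum]
  refine congrArg₂ (· + ·) ?_ ?_
  · refine Finset.sum_congr rfl fun i _ => ?_
    rw [Finset.mul_sum]
    refine Finset.sum_congr rfl fun j _ => ?_
    linear_combination (a₀ m.1 i j * fderiv ℝ f m.1 (Pi.single i 1)
      * fderiv ℝ g m.1 (Pi.single j 1) * Real.exp m.2) * hexp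
  · refine Finset.sum_congr rfl fun i _ => ?_
    linear_combination (b₀ m.1 i * (fderiv ℝ f m.1 (Pi.single i 1) * g m.1
      - f m.1 * fderiv ℝ g m.1 (Pi.single i 1)) * Real.exp m.2) * hexp

lemma lift_jet {F : MM d → ℝ} (hF : ContDiff ℝ (⊤ : ℕ∞) F) (m : MM d) :
    ∃ f : (Fin d → ℝ) → ℝ, ContDiff ℝ (⊤ : ℕ∞) f ∧ fderiv ℝ (liftF f) m = fderiv ℝ F m := by
  set L := fderiv ℝ F m with hL
  have hfC : ContDiff ℝ (⊤ : ℕ∞) (fun x : Fin d → ℝ => Real.exp (-m.2) * L ((x - m.1, 1))) :=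
    contDiff_const.mul (L.contDiff.comp
      (ContDiff.prodMk (contDiff_id.sub contDiff_const) contDiff_const))
  refine ⟨fun x => Real.exp (-m.2) * L ((x - m.1, 1)), hfC, ?_⟩
  have hf' : ∀ x : Fin d → ℝ, HasFDerivAt (fun x : Fin d → ℝ => Real.exp (-m.2) * L ((x - m.1, 1)))
      (Real.exp (-m.2) • (L.comp ((ContinuousLinearMap.id ℝ (Fin d → ℝ)).prod 0))) x := by
    intro x
    have h1 : HasFDerivAt (fun x : Fin d → ℝ => ((x - m.1, (1:ℝ)) : MM d))
        ((ContinuousLinearMap.id ℝ (Fin d → ℝ)).prod 0) x :=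
      HasFDerivAt.prodMk ((hasFDerivAt_id x).sub_const m.1) (hasFDerivAt_const 1 x)
    exact (L.hasFDerivAt.comp x h1).const_mul (Real.exp (-m.2))
  apply ContinuousLinearMap.ext
  intro v
  rw [fderiv_liftF hfC m v, (hf' m.1).fderiv]
  have hexp : Real.exp m.2 * Real.exp (-m.2) = 1 := by
    rw [← Real.exp_add]; simp
  have hv : v = ((v.1, (0:ℝ)) + v.2 • (((0 : Fin d → ℝ), (1:ℝ)) : MM d) : MM d) := by
    ext <;> simp
  simp only [ContinuousLinearMap.smul_apply, ContinuousLinearMap.coe_comp',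
    Function.comp_apply, ContinuousLinearMap.prod_apply, ContinuousLinearMap.coe_id',
    id_eq, ContinuousLinearMap.zero_apply, sub_self, smul_eq_mul]
  calc Real.exp m.2 * (Real.exp (-m.2) * L ((v.1, 0)))
        + Real.exp (-m.2) * L (((0:Fin d → ℝ), (1:ℝ))) * (Real.exp m.2 * v.2)
      = L ((v.1, 0)) + v.2 * L (((0:Fin d → ℝ), (1:ℝ))) := by
        linear_combination (L ((v.1, (0:ℝ))) + L (((0:Fin d → ℝ), (1:ℝ))) * v.2) * hexp
    _ = L v := by
        conv_rhs => rw [hv]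
        rw [map_add, map_smul, smul_eq_mul]

end Stmt16Aux
end Part5

open Stmt16Aux in
/-- Remark 3.12 iii), Poissonization for `k = 2` in coordinates: a Jacobi pair
`(a₀, b₀)` on `ℝ^d` Poissonizes to the homogeneous bracket with coefficients
`e^{−s}·a₀`, `e^{−s}·b₀` on `ℝ^d × ℝ`, which satisfies the Jacobi identity. -/
theorem stmt_16 (d : ℕ)
    (a₀ : (Fin d → ℝ) → Fin d → Fin d → ℝ)
    (b₀ : (Fin d → ℝ) → Fin d → ℝ)
    (ha₀ : ContDiff ℝ (⊤ : ℕ∞) a₀) (hb₀ : ContDiff ℝ (⊤ : ℕ∞) b₀)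
    (hskew : ∀ x i j, a₀ x i j = - a₀ x j i)
    (hjacobiN : ∀ f g h : (Fin d → ℝ) → ℝ,
      ContDiff ℝ (⊤ : ℕ∞) f → ContDiff ℝ (⊤ : ℕ∞) g → ContDiff ℝ (⊤ : ℕ∞) h →
      ∀ x, bracketN d a₀ b₀ (bracketN d a₀ b₀ f g) h x
        + bracketN d a₀ b₀ (bracketN d a₀ b₀ g h) f x
        + bracketN d a₀ b₀ (bracketN d a₀ b₀ h f) g x = 0) :
    ∀ F G H : (Fin d → ℝ) × ℝ → ℝ,
      ContDiff ℝ (⊤ : ℕ∞) F → ContDiff ℝ (⊤ : ℕ∞) G → ContDiff ℝ (⊤ : ℕ∞) H →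
      ∀ m, bracketM d (fun m' => Real.exp (-m'.2) • a₀ m'.1)
            (fun m' => Real.exp (-m'.2) • b₀ m'.1)
            (bracketM d (fun m' => Real.exp (-m'.2) • a₀ m'.1)
              (fun m' => Real.exp (-m'.2) • b₀ m'.1) F G) H m
        + bracketM d (fun m' => Real.exp (-m'.2) • a₀ m'.1)
            (fun m' => Real.exp (-m'.2) • b₀ m'.1)
            (bracketM d (fun m' => Real.exp (-m'.2) • a₀ m'.1)
              (fun m' => Real.exp (-m'.2) • b₀ m'.1) G H) F m
        + bracketM d (fun m' => Real.exp (-m'.2) • a₀ m'.1)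
            (fun m' => Real.exp (-m'.2) • b₀ m'.1)
            (bracketM d (fun m' => Real.exp (-m'.2) • a₀ m'.1)
              (fun m' => Real.exp (-m'.2) • b₀ m'.1) H F) G m = 0 := by
  intro F G H hF hG hH m
  have ha : ∀ i j, ContDiff ℝ (⊤ : ℕ∞) fun y : MM d => (fun m' : MM d => Real.exp (-m'.2) • a₀ m'.1) y i j := by
    intro i j
    simp only [Pi.smul_apply, smul_eq_mul]
    exact (Real.contDiff_exp.comp contDiff_snd.neg).mul
      ((contDiff_pi.mp (contDiff_pi.mp ha₀ i) j).comp contDiff_fst)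
  have hb : ∀ i, ContDiff ℝ (⊤ : ℕ∞) fun y : MM d => (fun m' : MM d => Real.exp (-m'.2) • b₀ m'.1) y i := by
    intro i
    simp only [Pi.smul_apply, smul_eq_mul]
    exact (Real.contDiff_exp.comp contDiff_snd.neg).mul
      ((contDiff_pi.mp hb₀ i).comp contDiff_fst)
  have hAskew : ∀ (y : MM d) (p q : Option (Fin d)),
      Amat (fun m' : MM d => Real.exp (-m'.2) • a₀ m'.1)
        (fun m' : MM d => Real.exp (-m'.2) • b₀ m'.1) y p q
      = - Amat (fun m' : MM d => Real.exp (-m'.2) • a₀ m'.1)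
        (fun m' : MM d => Real.exp (-m'.2) • b₀ m'.1) y q p := by
    intro y p q
    cases p <;> cases q <;> simp [Amat]
    rw [hskew y.1]
    ring
  obtain ⟨f, hfC, hfd⟩ := lift_jet hF m
  obtain ⟨g, hgC, hgd⟩ := lift_jet hG m
  obtain ⟨h, hhC, hhd⟩ := lift_jet hH m
  have hLf := contDiff_liftF hfC
  have hLg := contDiff_liftF hgC
  have hLh := contDiff_liftF hhC
  show jacM (fun m' : MM d => Real.exp (-m'.2) • a₀ m'.1)
    (fun m' : MM d => Real.exp (-m'.2) • b₀ m'.1) F G H m = 0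
  calc jacM _ _ F G H m
      = jacM _ _ (liftF f) G H m := jacM_congr_left ha hb hAskew hF hLf hG hH hfd.symm
    _ = jacM _ _ G H (liftF f) m := jacM_cyc _ _ _ _ _ _
    _ = jacM _ _ (liftF g) H (liftF f) m :=
        jacM_congr_left ha hb hAskew hG hLg hH hLf hgd.symm
    _ = jacM _ _ H (liftF f) (liftF g) m := jacM_cyc _ _ _ _ _ _
    _ = jacM _ _ (liftF h) (liftF f) (liftF g) m :=
        jacM_congr_left ha hb hAskew hH hLh hLf hLg hhd.symm
    _ = jacM _ _ (liftF f) (liftF g) (liftF h) m := jacM_cyc _ _ _ _ _ _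
    _ = 0 := by
        unfold jacM
        rw [bracket_lift a₀ b₀ hfC hgC, bracket_lift a₀ b₀ hgC hhC,
          bracket_lift a₀ b₀ hhC hfC,
          bracket_lift a₀ b₀ (contDiff_bracketN ha₀ hb₀ hfC hgC) hhC,
          bracket_lift a₀ b₀ (contDiff_bracketN ha₀ hb₀ hgC hhC) hfC,
          bracket_lift a₀ b₀ (contDiff_bracketN ha₀ hb₀ hhC hfC) hgC]
        have hj := hjacobiN f g h hfC hgC hhC m.1
        unfold liftF
        linear_combination Real.exp m.2 * hj
end
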